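/- arXiv:1907.12496 — 11 statements merged into one kernel-verified Lean document; each statement's English description precedes it below -/
import Mathlib

section
/- Let G be a profinite group. The category of discrete G-modules has a non-zero projective object if and only if G is finite. -/
/-! If `G` is finite, `ℤ[G]` is a free, hence projective, discrete module. If `G` is infinite,
a discrete projective `P` is a direct summand of a sum of permutation modules `ℤ[G⧸U]` with `U`
open normal, so it suffices that every `τ : P → ℤ[G⧸U]` vanishes. Given `x ∈ P`, lift `τ` to
`ℤ[G⧸V]` for an open normal `V ≤ U` fixing `x`, and then to `ℤ[G⧸W]` for an open normal `W ≤ V`: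
the image of `x` there is `V`-invariant, so every coefficient of the image of `x` in `ℤ[G⧸V]` is a
multiple of `[V : W]`, which is unbounded as `G` is infinite. -/

open Function

/-- A module over the group ring `ℤ[G]` is a *discrete* `G`-module if every element is
fixed by some open normal subgroup of `G`. -/
def IsDiscreteGMod (G : Type) [Group G] [TopologicalSpace G]
    (M : ModuleCat.{0} (MonoidAlgebra ℤ G)) : Prop :=
  ∀ x : M, ∃ H : Subgroup G, H.Normal ∧ IsOpen (H : Set G) ∧
    ∀ h ∈ H, (MonoidAlgebra.of ℤ G h) • x = x

/-- `P` is a projective object of the category of discrete `G`-modules: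
any map from `P` to a discrete module lifts along any epimorphism (= surjection)
of discrete modules. -/
def IsProjectiveDiscreteGMod (G : Type) [Group G] [TopologicalSpace G]
    (P : ModuleCat.{0} (MonoidAlgebra ℤ G)) : Prop :=
  ∀ (M N : ModuleCat.{0} (MonoidAlgebra ℤ G)), IsDiscreteGMod G M → IsDiscreteGMod G N →
    ∀ f : M →ₗ[MonoidAlgebra ℤ G] N, Surjective f →
      ∀ g : P →ₗ[MonoidAlgebra ℤ G] N,
        ∃ h : P →ₗ[MonoidAlgebra ℤ G] M, f.comp h = g

open MonoidAlgebra

theorem Finsupp.mapDomain_apply_eq_card_smul {α β M : Type*} [Finite α] [AddCommMonoid M]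
    (f : α → β) (x : α →₀ M) (a : α) (hx : ∀ i, f i = f a → x i = x a) :
    mapDomain f x (f a) = Nat.card {i // f i = f a} • x a := by
  classical
  have := Fintype.ofFinite α
  rw [mapDomain, sum_fintype _ _ fun _ => single_zero _, finsetSum_apply,
    Nat.card_eq_fintype_card, Fintype.card_subtype, ← Finset.sum_const, Finset.sum_filter]
  refine Finset.sum_congr rfl fun i _ => ?_
  rw [single_apply]
  split_ifs with h
  exacts [hx i h, rfl]

variable {G : Type} [Group G]

abbrev PermModule (G : Type) [Group G] (U : Subgroup G) [U.Normal] : Type :=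
  MonoidAlgebra ℤ (G ⧸ U)

namespace PermModule

section Action

variable (U : Subgroup G) [U.Normal]

noncomputable instance : Module (MonoidAlgebra ℤ G) (PermModule G U) :=
  Module.compHom _ (mapDomainRingHom ℤ (QuotientGroup.mk' U))

lemma smul_def (r : MonoidAlgebra ℤ G) (x : PermModule G U) :
    r • x = mapDomainRingHom ℤ (QuotientGroup.mk' U) r * x := rfl

lemma of_smul (g : G) (x : PermModule G U) : of ℤ G g • x = single (g : G ⧸ U) 1 * x := by
  simp [smul_def, mapDomainRingHom]

lemma of_smul_eq_self {u : G} (hu : u ∈ U) (x : PermModule G U) : of ℤ G u • x = x := by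
  rw [of_smul, (QuotientGroup.eq_one_iff u).2 hu, ← one_def, one_mul]

lemma coeff_of_smul_mul (g : G) (x : PermModule G U) (p : G ⧸ U) :
    (of ℤ G g • x).coeff (g * p) = x.coeff p := by
  rw [of_smul, coeff_single_mul_mul, one_mul]

lemma isDiscreteGMod [TopologicalSpace G] (hU : IsOpen (U : Set G)) :
    IsDiscreteGMod G (ModuleCat.of _ (PermModule G U)) :=
  fun x => ⟨U, inferInstance, hU, fun _ hu => of_smul_eq_self U hu x⟩

end Action

section Projection

variable {W V : Subgroup G} [W.Normal] [V.Normal]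

noncomputable def proj (h : W ≤ V) : PermModule G W →ₗ[MonoidAlgebra ℤ G] PermModule G V where
  toFun := mapDomainRingHom ℤ (QuotientGroup.map W V (.id G) h)
  map_add' := map_add _
  map_smul' r x := by
    simp only [smul_def, map_mul, RingHom.id_apply, ← RingHom.comp_apply,
      ← mapDomainRingHom_comp]
    rfl

lemma coeff_proj (h : W ≤ V) (z : PermModule G W) :
    (proj h z).coeff = Finsupp.mapDomain (QuotientGroup.map W V (.id G) h) z.coeff := rfl

lemma proj_surjective (h : W ≤ V) : Surjective (proj h) := by
  intro y
  obtain ⟨x, hx⟩ := Finsupp.mapDomain_surjective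
    (QuotientGroup.map_surjective_of_surjective W V (.id G) QuotientGroup.mk_surjective h) y.coeff
  exact ⟨ofCoeff x, congrArg ofCoeff hx⟩

/-- The fibres of `G ⧸ W → G ⧸ V` are `V`-orbits, so a `V`-fixed `z` is constant on them. -/
lemma coeff_proj_of_forall_smul_eq [Finite (G ⧸ W)] (h : W ≤ V) (z : PermModule G W)
    (hz : ∀ v ∈ V, of ℤ G v • z = z) (g : G) :
    (proj h z).coeff g =
      Nat.card {p : G ⧸ W // QuotientGroup.map W V (.id G) h p = g} • z.coeff g := by
  rw [coeff_proj]
  refine Finsupp.mapDomain_apply_eq_card_smul _ _ (g : G ⧸ W) fun p hp => ?_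
  induction p using QuotientGroup.induction_on with
  | H a =>
    have hag : a / g ∈ V := QuotientGroup.eq_iff_div_mem.1 hp
    rw [← div_mul_cancel a g, QuotientGroup.mk_mul, ← hz _ hag, coeff_of_smul_mul, hz _ hag]

end Projection

section Lift

variable {M : Type} [AddCommGroup M] [Module (MonoidAlgebra ℤ G) M]

noncomputable def orbitMap (U : Subgroup G) (y : M) (hy : ∀ u ∈ U, of ℤ G u • y = y) :
    G ⧸ U → M :=
  Quotient.lift (fun g : G => of ℤ G g • y) fun a b hab => by
    rw [← mul_inv_cancel_left a b, map_mul, mul_smul, hy _ (QuotientGroup.leftRel_apply.1 hab)]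

lemma orbitMap_smul (U : Subgroup G) (y : M) (hy : ∀ u ∈ U, of ℤ G u • y = y) (g : G)
    (q : G ⧸ U) : orbitMap U y hy (g • q) = of ℤ G g • orbitMap U y hy q := by
  induction q using QuotientGroup.induction_on with
  | H a =>
    rw [MulAction.Quotient.smul_mk]
    exact (congrArg (· • y) (map_mul _ g a)).trans (mul_smul _ _ _)

noncomputable def lift (U : Subgroup G) [U.Normal] (y : M) (hy : ∀ u ∈ U, of ℤ G u • y = y) :
    PermModule G U →ₗ[MonoidAlgebra ℤ G] M :=
  equivariantOfLinearOfComm ((basis (G ⧸ U) ℤ).constr ℤ (orbitMap U y hy)) fun g v => by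
    change ((basis (G ⧸ U) ℤ).constr ℤ (orbitMap U y hy) ∘ₗ GroupSMul.linearMap ℤ _ g) v =
      (GroupSMul.linearMap ℤ M g ∘ₗ (basis (G ⧸ U) ℤ).constr ℤ (orbitMap U y hy)) v
    refine LinearMap.congr_fun ((basis (G ⧸ U) ℤ).ext fun q => ?_) v
    simp only [LinearMap.comp_apply, GroupSMul.linearMap_apply, Module.Basis.constr_basis]
    rw [basis_apply, ← of_apply, of_smul, single_mul_single, mul_one, ← basis_apply,
      Module.Basis.constr_basis]
    exact orbitMap_smul U y hy g q

lemma lift_single_one (U : Subgroup G) [U.Normal] (y : M) (hy : ∀ u ∈ U, of ℤ G u • y = y) :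
    lift U y hy (single 1 1) = y := by
  rw [← basis_apply]
  exact ((basis (G ⧸ U) ℤ).constr_basis ℤ _ 1).trans (one_smul _ y)

end Lift

end PermModule

section Discrete

variable [TopologicalSpace G]

lemma isDiscreteGMod_self [Finite G] [T1Space G] :
    IsDiscreteGMod G (ModuleCat.of _ (MonoidAlgebra ℤ G)) :=
  fun _ => ⟨⊥, inferInstance, isOpen_discrete _, fun h hh => by
    rw [Subgroup.mem_bot.1 hh, map_one, one_smul]⟩

open DirectSum in
lemma isDiscreteGMod_directSum {ι : Type} (A : ι → Type) [∀ i, AddCommGroup (A i)]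
    [∀ i, Module (MonoidAlgebra ℤ G) (A i)] (hA : ∀ i, IsDiscreteGMod G (ModuleCat.of _ (A i))) :
    IsDiscreteGMod G (ModuleCat.of _ (⨁ i, A i)) := by
  classical
  intro m
  induction m using DirectSum.induction_on with
  | zero => exact ⟨⊤, inferInstance, isOpen_univ, fun _ _ => smul_zero _⟩
  | of i a =>
    obtain ⟨H, hHn, hHo, hH⟩ := hA i a
    refine ⟨H, hHn, hHo, fun h hh => ?_⟩
    rw [← lof_eq_of (MonoidAlgebra ℤ G), ← LinearMap.map_smul]
    exact congrArg _ (hH h hh)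
  | add m₁ m₂ h₁ h₂ =>
    obtain ⟨H₁, hn₁, ho₁, hf₁⟩ := h₁
    obtain ⟨H₂, hn₂, ho₂, hf₂⟩ := h₂
    exact ⟨H₁ ⊓ H₂, Subgroup.normal_inf_normal H₁ H₂, ho₁.inter ho₂, fun h hh => by
      rw [smul_add, hf₁ h hh.1, hf₂ h hh.2]⟩

lemma isProjectiveDiscreteGMod_of_projective (P : ModuleCat.{0} (MonoidAlgebra ℤ G))
    [Module.Projective (MonoidAlgebra ℤ G) P] : IsProjectiveDiscreteGMod G P :=
  fun _ _ _ _ f hf g => Module.projective_lifting_property f g hf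

end Discrete

section Profinite

variable [TopologicalSpace G] [IsTopologicalGroup G] [CompactSpace G]

lemma Subgroup.infinite_of_isOpen [Infinite G] {V : Subgroup G} (hV : IsOpen (V : Set G)) :
    Infinite V := by
  have := V.quotient_finite_of_isOpen hV
  rw [← not_finite_iff_infinite]
  exact fun hfin => not_finite_iff_infinite.2 ‹_›
    ((Subgroup.finite_iff_finite_and_finiteIndex V).2 ⟨hfin, V.finiteIndex_of_finite_quotient⟩)

variable [TotallyDisconnectedSpace G]

lemma exists_openNormalSubgroup_le_injOn {V : Subgroup G} (hV : IsOpen (V : Set G)) {S : Set G}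
    (hS : S.Finite) :
    ∃ W : OpenNormalSubgroup G, (W : Subgroup G) ≤ V ∧
      S.InjOn ((↑) : G → G ⧸ (W : Subgroup G)) := by
  set B := Set.image2 (fun a b => a⁻¹ * b) S S \ {1}
  have hB : IsOpen ((V : Set G) ∩ Bᶜ) :=
    hV.inter ((hS.image2 _ hS).sdiff).isClosed.isOpen_compl
  obtain ⟨W, hW⟩ := ProfiniteGrp.exist_openNormalSubgroup_sub_open_nhds_of_one hB
    ⟨V.one_mem, fun h => h.2 rfl⟩
  refine ⟨W, fun g hg => (hW hg).1, fun a ha b hb hab => ?_⟩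
  by_contra hne
  exact (hW (QuotientGroup.eq.1 hab)).2 ⟨Set.mem_image2_of_mem ha hb, by simpa [inv_mul_eq_one]⟩

end Profinite

namespace IsProjectiveDiscreteGMod

variable [TopologicalSpace G] [IsTopologicalGroup G] [CompactSpace G] [TotallyDisconnectedSpace G]
  [Infinite G] {P : ModuleCat.{0} (MonoidAlgebra ℤ G)}

/-- Lifting `τ` to `ℤ[G⧸W]` makes each coefficient of `τ x` divisible by the size of the fibres
of `G ⧸ W → G ⧸ V`; `W` is chosen so small that this exceeds the coefficient. -/
theorem apply_eq_zero_of_forall_smul_eq (hP : IsProjectiveDiscreteGMod G P) {V : Subgroup G}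
    [V.Normal] (hV : IsOpen (V : Set G)) (τ : P →ₗ[MonoidAlgebra ℤ G] PermModule G V) {x : P}
    (hx : ∀ v ∈ V, of ℤ G v • x = x) : τ x = 0 := by
  ext q
  obtain ⟨g, rfl⟩ := QuotientGroup.mk_surjective q
  set c := (τ x).coeff g
  have := Subgroup.infinite_of_isOpen hV
  obtain ⟨S, hSV, hS⟩ := (Set.infinite_coe_iff.1 ‹Infinite V›).exists_subset_card_eq (c.natAbs + 1)
  obtain ⟨W, hWV, hinj⟩ :=
    exists_openNormalSubgroup_le_injOn hV ((S.finite_toSet).image (· * g))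
  obtain ⟨τ', hτ'⟩ := hP _ _ (PermModule.isDiscreteGMod (W : Subgroup G) W.isOpen)
    (PermModule.isDiscreteGMod V hV) (PermModule.proj hWV) (PermModule.proj_surjective hWV) τ
  have hc := PermModule.coeff_proj_of_forall_smul_eq hWV (τ' x)
    (fun v hv => by rw [← map_smul, hx v hv]) g
  rw [← LinearMap.comp_apply, hτ'] at hc
  have hcard : S.card ≤ Nat.card
      {p : G ⧸ (W : Subgroup G) // QuotientGroup.map _ V (.id G) hWV p = g} := by
    rw [← Nat.card_eq_finsetCard S]
    refine Nat.card_le_card_of_injective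
      (fun s => ⟨((s * g : G) : G ⧸ (W : Subgroup G)), ?_⟩) fun s t hst => ?_
    · exact QuotientGroup.eq_iff_div_mem.2 (by simpa using hSV s.2)
    · exact Subtype.ext (mul_right_cancel
        (hinj ⟨s, s.2, rfl⟩ ⟨t, t.2, rfl⟩ (congrArg Subtype.val hst)))
  refine Int.eq_zero_of_abs_lt_dvd ⟨_, hc.trans (nsmul_eq_mul _ _)⟩ ?_
  rw [Int.abs_eq_natAbs]
  omega

theorem linearMap_permModule_eq_zero (hP : IsProjectiveDiscreteGMod G P) (hdis : IsDiscreteGMod G P)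
    {U : Subgroup G} [U.Normal] (hU : IsOpen (U : Set G))
    (τ : P →ₗ[MonoidAlgebra ℤ G] PermModule G U) : τ = 0 := by
  ext x : 1
  obtain ⟨H, hHn, hHo, hH⟩ := hdis x
  have : (U ⊓ H).Normal := Subgroup.normal_inf_normal U H
  obtain ⟨τ₁, hτ₁⟩ := hP _ _ (PermModule.isDiscreteGMod _ (hU.inter hHo))
    (PermModule.isDiscreteGMod U hU) (PermModule.proj inf_le_left)
    (PermModule.proj_surjective inf_le_left) τ
  rw [← hτ₁, LinearMap.comp_apply, hP.apply_eq_zero_of_forall_smul_eq (hU.inter hHo) τ₁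
    fun v hv => hH v hv.2, map_zero, LinearMap.zero_apply]

open DirectSum in
/-- `P` is a direct summand of `⨁_{y : P} ℤ[G⧸U_y]`, where `U_y` fixes `y`, and every map from
`P` to a summand vanishes. -/
theorem subsingleton (hP : IsProjectiveDiscreteGMod G P) (hdis : IsDiscreteGMod G P) :
    Subsingleton P := by
  classical
  choose U hUn hUo hU using id hdis
  let A : P → Type := fun y => PermModule G (U y)
  let f : (⨁ y, A y) →ₗ[MonoidAlgebra ℤ G] P :=
    toModule _ P P fun y => PermModule.lift (U y) y (hU y)
  have hf : Surjective f := fun y => ⟨lof _ P A y (single 1 1), by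
    rw [toModule_lof, PermModule.lift_single_one]⟩
  obtain ⟨s, hs⟩ := hP (.of _ (⨁ y, A y)) P
    (isDiscreteGMod_directSum A fun y => PermModule.isDiscreteGMod (U y) (hUo y)) hdis f hf .id
  have hs0 : s = 0 := LinearMap.ext fun x => ext_component (MonoidAlgebra ℤ G) fun y =>
    LinearMap.congr_fun (hP.linearMap_permModule_eq_zero hdis (hUo y) (component _ P A y ∘ₗ s)) x
  refine subsingleton_of_forall_eq 0 fun x => ?_
  rw [← LinearMap.id_apply (R := MonoidAlgebra ℤ G) x, ← hs, LinearMap.comp_apply, hs0,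
    LinearMap.zero_apply, map_zero]

end IsProjectiveDiscreteGMod

theorem stmt_0_general (G : Type) [Group G] [TopologicalSpace G] [IsTopologicalGroup G]
    [CompactSpace G] [TotallyDisconnectedSpace G] :
    (∃ P : ModuleCat.{0} (MonoidAlgebra ℤ G),
        IsDiscreteGMod G P ∧ Nontrivial P ∧ IsProjectiveDiscreteGMod G P) ↔ Finite G := by
  refine ⟨fun ⟨P, hdis, hnt, hP⟩ => ?_, fun _ => ⟨.of _ (MonoidAlgebra ℤ G), isDiscreteGMod_self,
    inferInstanceAs (Nontrivial (MonoidAlgebra ℤ G)), isProjectiveDiscreteGMod_of_projective _⟩⟩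
  by_contra hfin
  have := not_finite_iff_infinite.1 hfin
  have := hP.subsingleton hdis
  exact false_of_nontrivial_of_subsingleton P

/-- **(Chirvasitu–Kanda, Theorem 2.1.)** For a profinite group `G`, the category of discrete
`G`-modules has a non-zero projective object if and only if `G` is finite. -/
theorem stmt_0 (G : Type) [Group G] [TopologicalSpace G] [IsTopologicalGroup G]
    [CompactSpace G] [T2Space G] [TotallyDisconnectedSpace G] :
    (∃ P : ModuleCat.{0} (MonoidAlgebra ℤ G),
        IsDiscreteGMod G P ∧ Nontrivial P ∧ IsProjectiveDiscreteGMod G P) ↔ Finite G :=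
  stmt_0_general G
end

section
/- Let G be a profinite group. The category of discrete G-modules satisfies Grothendieck's axiom Ab4* (that is, arbitrary products exist and the product of any family of epimorphisms in the category is again an epimorphism; equivalently, product functors are exact) if and only if G is finite. -/
open Function

/-- A family of elements of a product of `ℤ[G]`-modules lies in the largest discrete
submodule of the product iff it is fixed componentwise by a single open normal subgroup. -/
def FixedBySomeOpenNormal (G : Type) [Group G] [TopologicalSpace G]
    {ι : Type} (M : ι → ModuleCat.{0} (MonoidAlgebra ℤ G)) (x : ∀ i, M i) : Prop :=
  ∃ K : Subgroup G, K.Normal ∧ IsOpen (K : Set G) ∧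
    ∀ i, ∀ k ∈ K, (MonoidAlgebra.of ℤ G k) • x i = x i

/-!
If `G` is infinite, lift the constant family `1` along the augmentations `ℤ[G ⧸ H] → ℤ`, one for
each open normal subgroup `H`. A lift fixed by an open normal subgroup `K` has `H`-component fixed
by the image of `K` in the finite group `G ⧸ H`; its coefficients are then constant on the cosets of
that image, so the order of the image divides the augmentation, which is `1`. Thus `K ≤ H` for all
`H`, so `K` is trivial, and a compact group whose trivial subgroup is open is finite.
-/

open MonoidAlgebra

theorem Subgroup.natCast_card_dvd_sum_of_mul_left_eq {Q R : Type*} [Group Q] [Fintype Q]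
    [CommSemiring R] (Z : Subgroup Q) (y : Q → R) (hy : ∀ z ∈ Z, ∀ a, y (z * a) = y a) :
    (Nat.card Z : R) ∣ ∑ a, y a := by
  classical
  rw [← Equiv.sum_comp (Equiv.inv Q) y, ← Fintype.sum_fiberwise (QuotientGroup.mk : Q → Q ⧸ Z)]
  refine Finset.dvd_sum fun c _ => ⟨y c.out⁻¹, ?_⟩
  have hfiber (a : {a : Q // (a : Q ⧸ Z) = c}) : y (a : Q)⁻¹ = y c.out⁻¹ := by
    have hmem : (a : Q)⁻¹ * c.out ∈ Z := by
      rw [← QuotientGroup.eq, a.2, QuotientGroup.out_eq']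
    rw [← hy _ hmem c.out⁻¹, mul_inv_cancel_right]
  have hcard : Fintype.card {a : Q // (a : Q ⧸ Z) = c} = Nat.card Z := by
    rw [← Nat.card_eq_fintype_card]
    exact (QuotientGroup.card_preimage_mk Z {c}).trans (by simp)
  simp only [Equiv.inv_apply, hfiber, Finset.sum_const, Finset.card_univ, hcard, nsmul_eq_mul]

theorem MonoidAlgebra.counit_eq_sum_coeff {k Q : Type*} [CommSemiring k] [Fintype Q]
    (x : MonoidAlgebra k Q) : Coalgebra.counit (R := k) x = ∑ a, x.coeff a := by
  induction x using MonoidAlgebra.induction_linear with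
  | zero => simp
  | add x y hx hy => simp [hx, hy, Finset.sum_add_distrib]
  | single a r => simp [coeff_single]

theorem MonoidAlgebra.natCast_card_dvd_counit_of_forall_of_mul_eq {k Q : Type*} [CommRing k]
    [Group Q] [Finite Q] (Z : Subgroup Q) {x : MonoidAlgebra k Q}
    (hx : ∀ z ∈ Z, of k Q z * x = x) : (Nat.card Z : k) ∣ Coalgebra.counit (R := k) x := by
  have := Fintype.ofFinite Q
  rw [counit_eq_sum_coeff]
  refine Z.natCast_card_dvd_sum_of_mul_left_eq _ fun z hz a => ?_
  simpa [coeff_single_mul_apply] using congrArg (·.coeff a) (hx z⁻¹ (inv_mem hz))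

theorem Subgroup.eq_bot_of_forall_of_mul_eq_of_counit_eq_one {Q : Type*} [Group Q] [Finite Q]
    (Z : Subgroup Q) {x : MonoidAlgebra ℤ Q} (hx : ∀ z ∈ Z, of ℤ Q z * x = x)
    (h1 : Coalgebra.counit (R := ℤ) x = 1) : Z = ⊥ := by
  have hdvd := natCast_card_dvd_counit_of_forall_of_mul_eq Z hx
  rw [h1, ← Nat.cast_one, Int.natCast_dvd_natCast, Nat.dvd_one] at hdvd
  exact Subgroup.card_eq_one.mp hdvd

def RingHom.restrictScalarsLinearMap {R S T : Type*} [Ring R] [Ring S] [Ring T] (φ : R →+* S)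
    (ψ : S →+* T) :
    (ModuleCat.restrictScalars φ).obj (.of S S) →ₗ[R]
      (ModuleCat.restrictScalars (ψ.comp φ)).obj (.of T T) where
  toFun := ψ
  map_add' := map_add ψ
  map_smul' r s := map_mul ψ (φ r) s

theorem RingHom.restrictScalarsLinearMap_surjective {R S T : Type*} [Ring R] [Ring S] [Ring T]
    (φ : R →+* S) {ψ : S →+* T} (hψ : Surjective ψ) :
    Surjective (φ.restrictScalarsLinearMap ψ) :=
  hψ

section GroupRing

variable {G : Type} [Group G]

theorem of_smul_restrictScalars_eq_self {S : Type*} [Ring S] (φ : MonoidAlgebra ℤ G →+* S)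
    (M : ModuleCat S) {g : G} (hg : φ (of ℤ G g) = 1) (m : (ModuleCat.restrictScalars φ).obj M) :
    of ℤ G g • m = m := by
  rw [ModuleCat.restrictScalars.smul_def, hg, one_smul]

theorem isDiscreteGMod_restrictScalars [TopologicalSpace G] {S : Type} [Ring S]
    (φ : MonoidAlgebra ℤ G →+* S) (M : ModuleCat.{0} S) (H : Subgroup G) (hHn : H.Normal)
    (hHo : IsOpen (H : Set G))
    (hφ : ∀ h ∈ H, φ (of ℤ G h) = 1) : IsDiscreteGMod G ((ModuleCat.restrictScalars φ).obj M) :=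
  fun m => ⟨H, hHn, hHo, fun h hh => of_smul_restrictScalars_eq_self φ M (hφ h hh) m⟩

theorem mapDomainRingHom_mk'_of_eq_one_of_mem {H : Subgroup G} [H.Normal] {h : G} (hh : h ∈ H) :
    mapDomainRingHom ℤ (QuotientGroup.mk' H) (of ℤ G h) = 1 := by
  simp [(QuotientGroup.eq_one_iff h).mpr hh, MonoidAlgebra.one_def]

theorem Subgroup.le_of_forall_mul_eq_of_counit_eq_one {H K : Subgroup G} [H.Normal]
    [Finite (G ⧸ H)] {x : MonoidAlgebra ℤ (G ⧸ H)}
    (hx : ∀ k ∈ K, mapDomainRingHom ℤ (QuotientGroup.mk' H) (of ℤ G k) * x = x)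
    (h1 : Coalgebra.counit (R := ℤ) x = 1) : K ≤ H := by
  rw [← QuotientGroup.ker_mk' H, ← Subgroup.map_eq_bot_iff]
  refine (K.map (QuotientGroup.mk' H)).eq_bot_of_forall_of_mul_eq_of_counit_eq_one ?_ h1
  rintro _ ⟨k, hk, rfl⟩
  simpa using hx k hk

end GroupRing

section Profinite

variable {G : Type*} [Group G] [TopologicalSpace G] [IsTopologicalGroup G] [CompactSpace G]

theorem Subgroup.eq_bot_of_forall_le_openNormalSubgroup [T1Space G] [TotallyDisconnectedSpace G]
    {K : Subgroup G} (hK : ∀ H : OpenNormalSubgroup G, K ≤ H.toSubgroup) : K = ⊥ := by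
  refine (Subgroup.eq_bot_iff_forall K).mpr fun k hk => ?_
  by_contra hk1
  obtain ⟨H, hH⟩ := ProfiniteGrp.exist_openNormalSubgroup_sub_open_nhds_of_one
    isOpen_compl_singleton (Ne.symm hk1)
  exact hH (hK H hk) rfl

theorem finite_of_isOpen_bot (h : IsOpen ((⊥ : Subgroup G) : Set G)) : Finite G :=
  have := Subgroup.quotient_finite_of_isOpen _ h
  Finite.of_equiv _ QuotientGroup.quotientBot.toEquiv

end Profinite

/-- **(Chirvasitu–Kanda, Proposition 2.2.)** For a profinite group `G`, the category of
discrete `G`-modules satisfies Ab4* — i.e. the product (computed in the category of discrete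
modules as the largest discrete submodule of the plain product) of any family of epimorphisms
is an epimorphism — if and only if `G` is finite. -/
theorem stmt_1 (G : Type) [Group G] [TopologicalSpace G] [IsTopologicalGroup G]
    [CompactSpace G] [T2Space G] [TotallyDisconnectedSpace G] :
    (∀ (ι : Type) (M N : ι → ModuleCat.{0} (MonoidAlgebra ℤ G)),
      (∀ i, IsDiscreteGMod G (M i)) → (∀ i, IsDiscreteGMod G (N i)) →
      ∀ f : ∀ i, M i →ₗ[MonoidAlgebra ℤ G] N i, (∀ i, Surjective (f i)) →
      ∀ y : ∀ i, N i, FixedBySomeOpenNormal G N y →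
        ∃ x : ∀ i, M i, FixedBySomeOpenNormal G M x ∧ ∀ i, f i (x i) = y i)
      ↔ Finite G := by
  constructor
  · intro hAb4
    let φ (H : OpenNormalSubgroup G) := mapDomainRingHom ℤ (QuotientGroup.mk' H.toSubgroup)
    let ε (H : OpenNormalSubgroup G) :=
      (Bialgebra.counitAlgHom ℤ (MonoidAlgebra ℤ (G ⧸ H.toSubgroup))).toRingHom
    have hε (H : OpenNormalSubgroup G) (g : G) : (ε H).comp (φ H) (of ℤ G g) = 1 := by simp [ε, φ]
    obtain ⟨x, ⟨K, -, hKopen, hKfix⟩, hx⟩ := hAb4 (OpenNormalSubgroup G)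
      (fun H => (ModuleCat.restrictScalars (φ H)).obj (.of _ _))
      (fun H => (ModuleCat.restrictScalars ((ε H).comp (φ H))).obj (.of ℤ ℤ))
      (fun H => isDiscreteGMod_restrictScalars _ _ H.toSubgroup H.isNormal' H.isOpen
        fun _ => mapDomainRingHom_mk'_of_eq_one_of_mem)
      (fun H => isDiscreteGMod_restrictScalars _ _ ⊤ inferInstance isOpen_univ
        fun g _ => hε H g)
      (fun H => (φ H).restrictScalarsLinearMap (ε H))
      (fun H => (φ H).restrictScalarsLinearMap_surjective fun n => ⟨single 1 n, by simp [ε]⟩)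
      (fun _ => (1 : ℤ))
      ⟨⊤, inferInstance, isOpen_univ, fun H g _ =>
        of_smul_restrictScalars_eq_self _ (.of ℤ ℤ) (hε H g) (1 : ℤ)⟩
    have hK (H : OpenNormalSubgroup G) : K ≤ H.toSubgroup :=
      have := H.toSubgroup.quotient_finite_of_isOpen H.isOpen
      Subgroup.le_of_forall_mul_eq_of_counit_eq_one (hKfix H) (hx H)
    exact finite_of_isOpen_bot (Subgroup.eq_bot_of_forall_le_openNormalSubgroup hK ▸ hKopen)
  · intro _ ι M N _ _ f hf y _
    choose x hx using fun i => hf i (y i)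
    refine ⟨x, ⟨⊥, inferInstance, isOpen_discrete _, fun i k hk => ?_⟩, hx⟩
    rw [Subgroup.mem_bot.mp hk, map_one, one_smul]
end

section
/- Let G be a profinite group and k a field. The following conditions are equivalent: (a) the category of discrete G-modules over k has a non-zero projective object; (b) the category of discrete G-modules over k has enough projective objects; (c) there exists an open normal subgroup H of G such that for every open normal subgroup K of G with K ≤ H, the characteristic of k does not divide the (finite) index [H : K]. (Condition (c) says that the characteristic of k occurs with finite exponent in the supernatural order |G|; in characteristic 0 it holds automatically.) -/
open Function

/-- A module over the group algebra `k[G]` is a *discrete* `G`-module if every element is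
fixed by some open normal subgroup of `G`. -/
def IsDiscreteGModK (G : Type) [Group G] [TopologicalSpace G] (k : Type) [Field k]
    (M : ModuleCat.{0} (MonoidAlgebra k G)) : Prop :=
  ∀ x : M, ∃ H : Subgroup G, H.Normal ∧ IsOpen (H : Set G) ∧
    ∀ h ∈ H, (MonoidAlgebra.of k G h) • x = x

/-- `P` is a projective object of the category of discrete `G`-modules over `k`. -/
def IsProjectiveDiscreteGModK (G : Type) [Group G] [TopologicalSpace G] (k : Type) [Field k]
    (P : ModuleCat.{0} (MonoidAlgebra k G)) : Prop :=
  ∀ (M N : ModuleCat.{0} (MonoidAlgebra k G)),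
    IsDiscreteGModK G k M → IsDiscreteGModK G k N →
    ∀ f : M →ₗ[MonoidAlgebra k G] N, Surjective f →
      ∀ g : P →ₗ[MonoidAlgebra k G] N,
        ∃ h : P →ₗ[MonoidAlgebra k G] M, f.comp h = g

/-! The permutation modules `k[G ⧸ K]`, for `K` open normal, generate the discrete modules: a
discrete `M` is a quotient of `⨁ x, k[G ⧸ K x]` with `K x` fixing `x`. If every index `[K : K']`
of open normal subgroups below `H` is invertible in `k`, the projection `k[G ⧸ K'] → k[G ⧸ K]`
splits (average over the fibres), so `k[G ⧸ K]` is projective for `K ≤ H`, and there are enough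
projectives. If instead below every open normal `K` there is an open normal `K'` with
`char k ∣ [K : K']`, then a `K`-fixed vector of `k[G ⧸ K']` has constant coefficients on the
fibres of `G ⧸ K' → G ⧸ K`, which have `[K : K']` elements, so it maps to zero in `k[G ⧸ K]`.
Lifting a map `P → k[G ⧸ L]` from a projective `P` through `k[G ⧸ K'] → k[G ⧸ L]` shows that it
vanishes, and `P`, being a direct summand of a sum of permutation modules, is zero. -/

open MonoidAlgebra
open scoped DirectSum

namespace DiscreteGMod

section PermModule

variable {G : Type} [Group G] {k : Type} [CommRing k]

variable (k) in
def IsFixedBy {M : Type} [AddCommGroup M] [Module k[G] M] (K : Subgroup G) (x : M) : Prop :=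
  ∀ κ ∈ K, of k G κ • x = x

variable {M : Type} [AddCommGroup M] [Module k[G] M] {K : Subgroup G}

theorem IsFixedBy.of_smul [K.Normal] {x : M} (hx : IsFixedBy k K x) (g : G) :
    IsFixedBy k K (of k G g • x) := by
  intro κ hκ
  have hconj : g⁻¹ * κ * g ∈ K := by simpa using ‹K.Normal›.conj_mem κ hκ g⁻¹
  rw [← mul_smul, ← map_mul, show κ * g = g * (g⁻¹ * κ * g) by group, map_mul, mul_smul,
    hx _ hconj]

theorem single_smul_eq_of_mk_eq {m : M} (hm : IsFixedBy k K m) {a b : G}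
    (hab : (a : G ⧸ K) = b) (c : k) : single a c • m = single b c • m := by
  rw [show b = a * (a⁻¹ * b) by group,
    show single (a * (a⁻¹ * b)) c = single a c * of k G (a⁻¹ * b) by simp [single_mul_single],
    mul_smul, hm _ (QuotientGroup.eq.mp hab)]

variable [K.Normal]

noncomputable instance : Module k[G] k[G ⧸ K] :=
  Module.compHom _ (mapDomainRingHom k (QuotientGroup.mk' K))

theorem smul_def (r : k[G]) (x : k[G ⧸ K]) :
    r • x = mapDomainRingHom k (QuotientGroup.mk' K) r * x := rfl

theorem single_smul_single (g : G) (c : k) (q : G ⧸ K) (d : k) :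
    single g c • single q d = single ((g : G ⧸ K) * q) (c * d) := by
  simp [smul_def]

theorem coeff_of_smul (g : G) (x : k[G ⧸ K]) (q : G ⧸ K) :
    (of k G g • x).coeff q = x.coeff ((g : G ⧸ K)⁻¹ * q) := by
  simp [smul_def]

theorem isFixedBy_permModule (x : k[G ⧸ K]) : IsFixedBy k K x := by
  intro κ hκ
  rw [of_apply, smul_def, mapDomainRingHom_apply, mapDomain_single, QuotientGroup.mk'_apply,
    (QuotientGroup.eq_one_iff κ).mpr hκ, ← MonoidAlgebra.one_def, one_mul]

theorem single_eq_single_smul_single_one (q : G ⧸ K) (c : k) :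
    (single q c : k[G ⧸ K]) = single q.out c • single 1 1 := by
  rw [single_smul_single, QuotientGroup.out_eq', mul_one, mul_one]

theorem permModule_hom_ext {N : Type} [AddCommGroup N] [Module k[G] N]
    {f₁ f₂ : k[G ⧸ K] →ₗ[k[G]] N} (h : f₁ (single 1 1) = f₂ (single 1 1)) : f₁ = f₂ := by
  ext x
  induction x using MonoidAlgebra.induction_linear with
  | zero => simp
  | add x y hx hy => rw [map_add, map_add, hx, hy]
  | single q c => rw [single_eq_single_smul_single_one, map_smul, map_smul, h]

variable (K) in
noncomputable def liftOfFixed (m : M) (hm : IsFixedBy k K m) : k[G ⧸ K] →ₗ[k[G]] M where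
  toFun x := x.coeff.sum fun q c => single q.out c • m
  map_add' x y := Finsupp.sum_add_index' (by simp) (by simp [single_add, add_smul])
  map_smul' r x := by
    rw [RingHom.id_apply]
    have hadd (x y : k[G ⧸ K]) : (x + y).coeff.sum (fun q c => single q.out c • m) =
        x.coeff.sum (fun q c => single q.out c • m) + y.coeff.sum (fun q c => single q.out c • m) :=
      Finsupp.sum_add_index' (by simp) (by simp [single_add, add_smul])
    induction x using MonoidAlgebra.induction_linear with
    | zero => simp
    | add x y hx hy => rw [smul_add, hadd, hadd, hx, hy, smul_add]
    | single q c =>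
      induction r using MonoidAlgebra.induction_linear with
      | zero => simp
      | add r s hr hs => rw [add_smul, hadd, hr, hs, add_smul]
      | single g d =>
        simp only [single_smul_single, coeff_single, Finsupp.sum_single_index, zero_smul,
          single_zero, smul_smul, single_mul_single]
        exact single_smul_eq_of_mk_eq hm (by simp) _

theorem liftOfFixed_single_one (m : M) (hm : IsFixedBy k K m) :
    liftOfFixed K m hm (single 1 1) = m := by
  change ((single (1 : G ⧸ K) (1 : k)).coeff.sum fun q c => single q.out c • m) = m
  rw [coeff_single, Finsupp.sum_single_index (by simp),
    single_smul_eq_of_mk_eq hm (QuotientGroup.out_eq' 1) 1, ← MonoidAlgebra.one_def, one_smul]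

section QuotientProj

variable {K' L : Subgroup G} [K'.Normal] [L.Normal]

noncomputable def quotientProj (h : K' ≤ K) : k[G ⧸ K'] →ₗ[k[G]] k[G ⧸ K] where
  toFun := mapDomainRingHom k (QuotientGroup.map K' K (.id G) h)
  map_add' := map_add _
  map_smul' r y := by
    rw [smul_def, smul_def, map_mul, RingHom.id_apply, ← RingHom.comp_apply,
      ← mapDomainRingHom_comp]
    rfl

theorem quotientProj_single (h : K' ≤ K) (q : G ⧸ K') (c : k) :
    quotientProj h (single q c) = single (QuotientGroup.map K' K (.id G) h q) c :=
  mapDomain_single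

theorem quotientProj_surjective (h : K' ≤ K) : Surjective (quotientProj (k := k) h) := by
  intro x
  induction x using MonoidAlgebra.induction_linear with
  | zero => exact ⟨0, map_zero _⟩
  | add x y hx hy =>
    obtain ⟨x', rfl⟩ := hx
    obtain ⟨y', rfl⟩ := hy
    exact ⟨x' + y', map_add _ _ _⟩
  | single q c =>
    induction q using QuotientGroup.induction_on with
    | H g => exact ⟨single (g : G ⧸ K') c, quotientProj_single h _ c⟩

theorem quotientProj_comp (h : K' ≤ K) (h' : K ≤ L) :
    quotientProj (k := k) h' ∘ₗ quotientProj h = quotientProj (h.trans h') :=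
  permModule_hom_ext (by simp [quotientProj_single])

theorem card_ker_quotientMap (h : K' ≤ K) [K'.FiniteIndex] :
    Nat.card (QuotientGroup.map K' K (.id G) h).ker = K'.relIndex K := by
  have : K.FiniteIndex := Subgroup.finiteIndex_of_le h
  have hsurj : Surjective (QuotientGroup.map K' K (.id G) h) :=
    fun q => QuotientGroup.induction_on q fun g => ⟨g, rfl⟩
  have hcard := Subgroup.card_mul_index (QuotientGroup.map K' K (.id G) h).ker
  rw [Subgroup.index_ker, MonoidHom.range_eq_top_of_surjective _ hsurj, Subgroup.card_top,
    ← Subgroup.index_eq_card, ← Subgroup.index_eq_card, ← Subgroup.relIndex_mul_index h] at hcard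
  exact Nat.eq_of_mul_eq_mul_right (Nat.pos_of_ne_zero Subgroup.FiniteIndex.index_ne_zero) hcard

theorem coeff_one_quotientProj (h : K' ≤ K) [K'.FiniteIndex] {y : k[G ⧸ K']}
    (hy : IsFixedBy k K y) : (quotientProj h y).coeff 1 = K'.relIndex K • y.coeff 1 := by
  classical
  have : Fintype (G ⧸ K') := Fintype.ofFinite _
  set f := QuotientGroup.map K' K (.id G) h
  have hconst : ∀ q ∈ Finset.univ.filter (f · = 1), y.coeff q = y.coeff 1 := by
    intro q hq
    induction q using QuotientGroup.induction_on with
    | H g =>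
      have hg : g ∈ K := (QuotientGroup.eq_one_iff g).mp (Finset.mem_filter.mp hq).2
      calc y.coeff g = (of k G g • y).coeff g := by rw [hy g hg]
        _ = y.coeff 1 := by rw [coeff_of_smul, inv_mul_cancel]
  calc (quotientProj h y).coeff 1 = Finsupp.mapDomain f y.coeff (f 1) := by
        rw [map_one f]; rfl
    _ = ∑ q ∈ y.coeff.support with f q = 1, y.coeff q := by
        rw [Finsupp.mapDomain_apply_eq_sum, map_one]
    _ = ∑ q ∈ Finset.univ.filter (f · = 1), y.coeff q :=
        Finset.sum_subset (Finset.filter_subset_filter _ (Finset.subset_univ _))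
          (fun q hq hq' => by
            by_contra hne
            exact hq' (Finset.mem_filter.mpr ⟨Finsupp.mem_support_iff.mpr hne,
              (Finset.mem_filter.mp hq).2⟩))
    _ = K'.relIndex K • y.coeff 1 := by
        rw [Finset.sum_congr rfl hconst, Finset.sum_const, ← card_ker_quotientMap h,
          ← Fintype.card_subtype, ← Nat.card_eq_fintype_card]
        rfl

theorem quotientProj_eq_zero_of_isFixedBy (h : K' ≤ K) [K'.FiniteIndex]
    (hp : ringChar k ∣ K'.relIndex K) {y : k[G ⧸ K']} (hy : IsFixedBy k K y) :
    quotientProj h y = 0 := by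
  have hzero : (K'.relIndex K : k) = 0 := (ringChar.spec k _).mpr hp
  ext q
  induction q using QuotientGroup.induction_on with
  | H g =>
    calc (quotientProj h y).coeff g = (of k G g⁻¹ • quotientProj h y).coeff 1 := by
          rw [coeff_of_smul]; simp
      _ = (quotientProj h (of k G g⁻¹ • y)).coeff 1 := by rw [map_smul]
      _ = (0 : k[G ⧸ K]).coeff g := by
          rw [coeff_one_quotientProj h (hy.of_smul _), nsmul_eq_mul, hzero, zero_mul, coeff_zero]
          rfl

theorem exists_rightInverse_quotientProj (h : K' ≤ K) [K'.FiniteIndex]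
    (hu : IsUnit (K'.relIndex K : k)) :
    ∃ σ : k[G ⧸ K] →ₗ[k[G]] k[G ⧸ K'], quotientProj h ∘ₗ σ = LinearMap.id := by
  classical
  set D := (QuotientGroup.map K' K (.id G) h).ker
  have : Fintype D := Fintype.ofFinite _
  set e : k[G ⧸ K'] := ∑ d : D, single (d : G ⧸ K') (hu.unit⁻¹ : kˣ)
  have he : IsFixedBy k K e := by
    intro κ hκ
    have hκD : (κ : G ⧸ K') ∈ D := (QuotientGroup.eq_one_iff κ).mpr hκ
    simp only [e, Finset.smul_sum, of_apply, single_smul_single, one_mul]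
    exact Fintype.sum_equiv (Equiv.mulLeft ⟨_, hκD⟩) _ _ (fun d => rfl)
  refine ⟨liftOfFixed K e he, permModule_hom_ext ?_⟩
  rw [LinearMap.comp_apply, liftOfFixed_single_one, LinearMap.id_apply]
  simp only [e, map_sum, quotientProj_single, MonoidHom.mem_ker.mp (Subtype.prop _)]
  rw [Finset.sum_const, Finset.card_univ, ← Nat.card_eq_fintype_card, card_ker_quotientMap,
    smul_single, nsmul_eq_mul, hu.mul_val_inv]

end QuotientProj

end PermModule

section Discrete

variable {G : Type} [Group G] [TopologicalSpace G] {k : Type} [Field k]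

theorem isDiscreteGModK_permModule (K : Subgroup G) [K.Normal] (hK : IsOpen (K : Set G)) :
    IsDiscreteGModK G k (ModuleCat.of k[G] k[G ⧸ K]) :=
  fun x => ⟨K, inferInstance, hK, isFixedBy_permModule x⟩

theorem isDiscreteGModK_directSum {ι : Type} (F : ι → Type) [∀ i, AddCommGroup (F i)]
    [∀ i, Module k[G] (F i)] (hF : ∀ i, IsDiscreteGModK G k (ModuleCat.of k[G] (F i))) :
    IsDiscreteGModK G k (ModuleCat.of k[G] (⨁ i, F i)) := by
  classical
  intro z
  induction z using DirectSum.induction_on with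
  | zero => exact ⟨⊤, inferInstance, isOpen_univ, fun _ _ => smul_zero _⟩
  | of i y =>
    obtain ⟨K, hKn, hKo, hy⟩ := hF i y
    refine ⟨K, hKn, hKo, fun κ hκ => ?_⟩
    rw [← DirectSum.lof_eq_of k[G], ← map_smul, hy κ hκ]
  | add a b ha hb =>
    obtain ⟨K₁, hn₁, ho₁, ha⟩ := ha
    obtain ⟨K₂, hn₂, ho₂, hb⟩ := hb
    exact ⟨K₁ ⊓ K₂, Subgroup.normal_inf_normal _ _, ho₁.inter ho₂,
      fun κ hκ => by rw [smul_add, ha κ hκ.1, hb κ hκ.2]⟩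

theorem _root_.IsDiscreteGModK.exists_le_isFixedBy {M : ModuleCat.{0} k[G]}
    (hM : IsDiscreteGModK G k M) (x : M) (H : OpenNormalSubgroup G) :
    ∃ K : OpenNormalSubgroup G, K ≤ H ∧ IsFixedBy k (K : Subgroup G) x := by
  obtain ⟨K, hKn, hKo, hx⟩ := hM x
  exact ⟨H ⊓ ⟨⟨K, hKo⟩, hKn⟩, inf_le_left, fun κ hκ => hx κ hκ.2⟩

theorem exists_surjective_directSum_permModule {M : ModuleCat.{0} k[G]}
    (hM : IsDiscreteGModK G k M) (H : OpenNormalSubgroup G) :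
    ∃ K : M → OpenNormalSubgroup G, (∀ x, K x ≤ H) ∧
      ∃ f : (⨁ x, k[G ⧸ (K x : Subgroup G)]) →ₗ[k[G]] M, Surjective f := by
  classical
  choose K hKH hK using fun x => hM.exists_le_isFixedBy x H
  refine ⟨K, hKH, DirectSum.toModule k[G] M M fun x => liftOfFixed _ x (hK x),
    fun x => ⟨DirectSum.lof k[G] M _ x (single 1 1), ?_⟩⟩
  rw [DirectSum.toModule_lof, liftOfFixed_single_one]

theorem isProjective_directSum {ι : Type} (F : ι → Type) [∀ i, AddCommGroup (F i)]
    [∀ i, Module k[G] (F i)] (hF : ∀ i, IsProjectiveDiscreteGModK G k (ModuleCat.of k[G] (F i))) :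
    IsProjectiveDiscreteGModK G k (ModuleCat.of k[G] (⨁ i, F i)) := by
  classical
  intro M N hM hN f hf g
  choose h hh using fun i => hF i M N hM hN f hf (g ∘ₗ DirectSum.lof k[G] ι F i)
  refine ⟨DirectSum.toModule k[G] ι M h, DirectSum.linearMap_ext k[G] fun i => ?_⟩
  ext y
  simpa using LinearMap.congr_fun (hh i) y

variable (G k) in
def HasCharCoprimeSubgroup : Prop :=
  ∃ H : Subgroup G, H.Normal ∧ IsOpen (H : Set G) ∧
    ∀ K : Subgroup G, K.Normal → IsOpen (K : Set G) → K ≤ H → ¬ ringChar k ∣ K.relIndex H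

variable (G k) in
def HasNontrivialProjective : Prop :=
  ∃ P : ModuleCat.{0} k[G], IsDiscreteGModK G k P ∧ Nontrivial P ∧ IsProjectiveDiscreteGModK G k P

variable (G k) in
def HasEnoughProjectives : Prop :=
  ∀ M : ModuleCat.{0} k[G], IsDiscreteGModK G k M →
    ∃ P : ModuleCat.{0} k[G], IsDiscreteGModK G k P ∧ IsProjectiveDiscreteGModK G k P ∧
      ∃ f : P →ₗ[k[G]] M, Surjective f

theorem hasNontrivialProjective_of_hasEnoughProjectives (hb : HasEnoughProjectives G k) :
    HasNontrivialProjective G k := by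
  obtain ⟨P, hPd, hPp, f, hf⟩ := hb _ (isDiscreteGModK_permModule (k := k) ⊤ isOpen_univ)
  exact ⟨P, hPd, hf.nontrivial, hPp⟩

end Discrete

section Compact

variable {G : Type} [Group G] [TopologicalSpace G] [IsTopologicalGroup G] [CompactSpace G]
  {k : Type} [Field k]

theorem finiteIndex_of_isOpen {K : Subgroup G} (hK : IsOpen (K : Set G)) : K.FiniteIndex :=
  have := Subgroup.quotient_finite_of_isOpen K hK
  Subgroup.finiteIndex_of_finite_quotient

theorem isProjective_permModule (K : Subgroup G) [K.Normal] (hKo : IsOpen (K : Set G))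
    (hK : ∀ K' : Subgroup G, K'.Normal → IsOpen (K' : Set G) → K' ≤ K →
      ¬ ringChar k ∣ K'.relIndex K) :
    IsProjectiveDiscreteGModK G k (ModuleCat.of k[G] k[G ⧸ K]) := by
  intro M N hM _ f hf g
  obtain ⟨m, hm⟩ := hf (g (single 1 1))
  obtain ⟨K', hK'K, hm'⟩ := hM.exists_le_isFixedBy m ⟨⟨K, hKo⟩, inferInstance⟩
  have := finiteIndex_of_isOpen K'.isOpen
  obtain ⟨σ, hσ⟩ := exists_rightInverse_quotientProj (k := k) hK'K
    (Ne.isUnit fun h0 => hK K' inferInstance K'.isOpen hK'K ((ringChar.spec k _).mp h0))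
  have hlift : f ∘ₗ liftOfFixed K' m hm' = g ∘ₗ quotientProj hK'K :=
    permModule_hom_ext (by simp [liftOfFixed_single_one, quotientProj_single, hm])
  refine ⟨liftOfFixed K' m hm' ∘ₗ σ, ?_⟩
  rw [← LinearMap.comp_assoc, hlift, LinearMap.comp_assoc, hσ, LinearMap.comp_id]

theorem hasEnoughProjectives_of_hasCharCoprimeSubgroup (hc : HasCharCoprimeSubgroup G k) :
    HasEnoughProjectives G k := by
  obtain ⟨H, hHn, hHo, hH⟩ := hc
  intro M hM
  obtain ⟨K, hKH, f, hf⟩ := exists_surjective_directSum_permModule hM ⟨⟨H, hHo⟩, hHn⟩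
  refine ⟨ModuleCat.of k[G] (⨁ x, k[G ⧸ (K x : Subgroup G)]),
    isDiscreteGModK_directSum _ fun x => isDiscreteGModK_permModule _ (K x).isOpen,
    isProjective_directSum _ fun x => isProjective_permModule _ (K x).isOpen ?_, f, hf⟩
  intro K' hK'n hK'o hK'K hp
  exact hH K' hK'n hK'o (hK'K.trans (hKH x))
    (hp.trans (Dvd.intro _ (Subgroup.relIndex_mul_relIndex K' _ H hK'K (hKH x))))

theorem hom_permModule_eq_zero (hc : ¬ HasCharCoprimeSubgroup G k) {P : ModuleCat.{0} k[G]}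
    (hPd : IsDiscreteGModK G k P) (hPp : IsProjectiveDiscreteGModK G k P)
    (L : Subgroup G) [L.Normal] (hLo : IsOpen (L : Set G)) (φ : P →ₗ[k[G]] k[G ⧸ L]) :
    φ = 0 := by
  ext x
  obtain ⟨K, hKL, hx⟩ := hPd.exists_le_isFixedBy x ⟨⟨L, hLo⟩, inferInstance⟩
  obtain ⟨K', hK'n, hK'o, hK'K, hp⟩ : ∃ K' : Subgroup G, K'.Normal ∧ IsOpen (K' : Set G) ∧
      K' ≤ K ∧ ringChar k ∣ K'.relIndex K := by
    by_contra! h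
    exact hc ⟨K, inferInstance, K.isOpen, h⟩
  have := finiteIndex_of_isOpen hK'o
  obtain ⟨ψ, hψ⟩ := hPp _ _ (isDiscreteGModK_permModule K' hK'o)
    (isDiscreteGModK_permModule L hLo) (quotientProj (hK'K.trans hKL))
    (quotientProj_surjective _) φ
  have hψx : IsFixedBy k (K : Subgroup G) (ψ x) := fun κ hκ => by rw [← map_smul, hx κ hκ]
  rw [← hψ, ← quotientProj_comp hK'K hKL, LinearMap.comp_apply, LinearMap.comp_apply,
    quotientProj_eq_zero_of_isFixedBy hK'K hp hψx, map_zero, LinearMap.zero_apply]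

theorem subsingleton_of_isProjective (hc : ¬ HasCharCoprimeSubgroup G k)
    {P : ModuleCat.{0} k[G]} (hPd : IsDiscreteGModK G k P)
    (hPp : IsProjectiveDiscreteGModK G k P) : Subsingleton P := by
  classical
  obtain ⟨K, -, f, hf⟩ :=
    exists_surjective_directSum_permModule hPd ⟨⟨⊤, isOpen_univ⟩, inferInstance⟩
  obtain ⟨s, hs⟩ := hPp _ P (isDiscreteGModK_directSum _ fun x => isDiscreteGModK_permModule _
    (K x).isOpen) hPd f hf LinearMap.id
  have hs0 : s = 0 := by
    refine LinearMap.ext fun x => DirectSum.ext_component k[G] fun j => ?_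
    rw [LinearMap.zero_apply, map_zero, ← LinearMap.comp_apply,
      hom_permModule_eq_zero hc hPd hPp _ (K j).isOpen (DirectSum.component k[G] P _ j ∘ₗ s),
      LinearMap.zero_apply]
  refine ⟨fun a b => ?_⟩
  rw [← LinearMap.id_apply (R := k[G]) a, ← LinearMap.id_apply (R := k[G]) b, ← hs, hs0]
  simp

theorem hasCharCoprimeSubgroup_of_hasNontrivialProjective (ha : HasNontrivialProjective G k) :
    HasCharCoprimeSubgroup G k := by
  obtain ⟨P, hPd, hPn, hPp⟩ := ha
  by_contra hc
  exact not_subsingleton P (subsingleton_of_isProjective hc hPd hPp)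

end Compact

end DiscreteGMod

theorem stmt_2_general (G : Type) [Group G] [TopologicalSpace G] [IsTopologicalGroup G]
    [CompactSpace G] (k : Type) [Field k] :
    ((∃ P : ModuleCat.{0} (MonoidAlgebra k G),
        IsDiscreteGModK G k P ∧ Nontrivial P ∧ IsProjectiveDiscreteGModK G k P) ↔
      (∃ H : Subgroup G, H.Normal ∧ IsOpen (H : Set G) ∧
        ∀ K : Subgroup G, K.Normal → IsOpen (K : Set G) → K ≤ H →
          ¬ (ringChar k : ℕ) ∣ K.relIndex H)) ∧
    ((∀ M : ModuleCat.{0} (MonoidAlgebra k G), IsDiscreteGModK G k M →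
        ∃ P : ModuleCat.{0} (MonoidAlgebra k G), IsDiscreteGModK G k P ∧
          IsProjectiveDiscreteGModK G k P ∧
          ∃ f : P →ₗ[MonoidAlgebra k G] M, Surjective f) ↔
      (∃ H : Subgroup G, H.Normal ∧ IsOpen (H : Set G) ∧
        ∀ K : Subgroup G, K.Normal → IsOpen (K : Set G) → K ≤ H →
          ¬ (ringChar k : ℕ) ∣ K.relIndex H)) := by
  open DiscreteGMod in
  have c_of_a := hasCharCoprimeSubgroup_of_hasNontrivialProjective (G := G) (k := k)
  have b_of_c := hasEnoughProjectives_of_hasCharCoprimeSubgroup (G := G) (k := k)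
  have a_of_b := hasNontrivialProjective_of_hasEnoughProjectives (G := G) (k := k)
  exact ⟨⟨c_of_a, fun hc => a_of_b (b_of_c hc)⟩, ⟨fun hb => c_of_a (a_of_b hb), b_of_c⟩⟩

/-- **(Chirvasitu–Kanda, Theorem 3.1.)** For a profinite group `G` and a field `k`, the
following are equivalent: (a) the category of discrete `G`-modules over `k` has a non-zero
projective object; (b) it has enough projectives; (c) there is an open normal subgroup `H`
of `G` such that `char k` divides no index `[H : K]` for open normal `K ≤ H` (i.e. `char k`
has finite exponent in the supernatural order of `G`). -/
theorem stmt_2 (G : Type) [Group G] [TopologicalSpace G] [IsTopologicalGroup G]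
    [CompactSpace G] [T2Space G] [TotallyDisconnectedSpace G] (k : Type) [Field k] :
    ((∃ P : ModuleCat.{0} (MonoidAlgebra k G),
        IsDiscreteGModK G k P ∧ Nontrivial P ∧ IsProjectiveDiscreteGModK G k P) ↔
      (∃ H : Subgroup G, H.Normal ∧ IsOpen (H : Set G) ∧
        ∀ K : Subgroup G, K.Normal → IsOpen (K : Set G) → K ≤ H →
          ¬ (ringChar k : ℕ) ∣ K.relIndex H)) ∧
    ((∀ M : ModuleCat.{0} (MonoidAlgebra k G), IsDiscreteGModK G k M →
        ∃ P : ModuleCat.{0} (MonoidAlgebra k G), IsDiscreteGModK G k P ∧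
          IsProjectiveDiscreteGModK G k P ∧
          ∃ f : P →ₗ[MonoidAlgebra k G] M, Surjective f) ↔
      (∃ H : Subgroup G, H.Normal ∧ IsOpen (H : Set G) ∧
        ∀ K : Subgroup G, K.Normal → IsOpen (K : Set G) → K ≤ H →
          ¬ (ringChar k : ℕ) ∣ K.relIndex H)) :=
  stmt_2_general G k
end

section
/- Let G be a profinite group, k a field, and H an open normal subgroup of G such that for every open normal subgroup K of G with K ≤ H, the characteristic of k does not divide the (finite) index [H : K] (i.e., the characteristic of k does not divide the supernatural order |H|). Let M be a k[G/H]-module, regarded as a discrete G-module over k via the projection G → G/H. Then M is a projective object of the category of discrete G-modules over k if and only if M is projective as a k[G/H]-module. -/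
/-!
Since `H` acts trivially on `M`, every `k[G]`-linear map out of `M` lands in `H`-fixed vectors,
and a vector is `H`-fixed exactly when it is killed by the kernel of `k[G] → k[G/H]`. Lifting
along an epimorphism `A → B` of discrete modules thus reduces to lifting `H`-fixed vectors of `B`
to `H`-fixed vectors of `A`: lift `b` to some `a₀`, fixed by an open normal `K`, and average the
translates of `a₀` over `H/(H ∩ K)`, whose order is invertible in `k`. Conversely, the free
`k[G/H]`-module on `M` is itself a discrete `G`-module, and a splitting of its augmentation in
discrete modules is automatically `k[G/H]`-linear.
-/

open Function

open MonoidAlgebra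

section PullBack

variable {R S : Type*} [Ring R] [Ring S] {φ : R →+* S}
variable {P A B : Type*} [AddCommGroup P] [Module R P] [Module S P]
  [AddCommGroup A] [Module R A] [AddCommGroup B] [Module R B]

theorem smul_eq_smul_of_ker_smul_eq_zero {a : A} (ha : ∀ r ∈ RingHom.ker φ, r • a = 0)
    {r₁ r₂ : R} (h : φ r₁ = φ r₂) : r₁ • a = r₂ • a := by
  rw [← sub_eq_zero, ← sub_smul]
  exact ha _ (by rw [RingHom.mem_ker, map_sub, h, sub_self])

theorem Module.projective_of_lifting_property_of_surjective (hφ : Surjective φ)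
    (hP : ∀ (r : R) (x : P), r • x = φ r • x)
    [Module R (P →₀ S)] (hF : ∀ (r : R) (v : P →₀ S), r • v = φ r • v)
    (hlift : ∀ ε : (P →₀ S) →ₗ[R] P, Surjective ε →
      ∃ s : P →ₗ[R] P →₀ S, ε ∘ₗ s = LinearMap.id) :
    Module.Projective S P := by
  let ε : (P →₀ S) →ₗ[R] P :=
    { toFun := Finsupp.linearCombination S id
      map_add' := map_add _
      map_smul' := fun r v => by simp only [hP, hF, map_smul, RingHom.id_apply] }
  obtain ⟨s, hs⟩ := hlift ε (Finsupp.linearCombination_id_surjective S P)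
  refine Module.projective_def.mpr
    ⟨{ toFun := s
       map_add' := map_add s
       map_smul' := fun c x => ?_ }, fun x => LinearMap.congr_fun hs x⟩
  obtain ⟨r, rfl⟩ := hφ c
  simpa only [hP, hF, RingHom.id_apply] using s.map_smul r x

theorem Module.projective_lifting_property_of_ker_smul_eq_zero (hφ : Surjective φ)
    [Module.Projective S P] (hP : ∀ (r : R) (x : P), r • x = φ r • x)
    (f : A →ₗ[R] B) (g : P →ₗ[R] B)
    (hg : ∀ x, ∃ a, (∀ r ∈ RingHom.ker φ, r • a = 0) ∧ f a = g x) :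
    ∃ h : P →ₗ[R] A, f ∘ₗ h = g := by
  choose a ha hfa using hg
  obtain ⟨s, hs⟩ := Module.projective_def.mp ‹Module.Projective S P›
  set σ := surjInv hφ
  have hσ : ∀ c, φ (σ c) = c := surjInv_eq hφ
  have σ_zero : ∀ x, σ 0 • a x = 0 := fun x => by
    rw [smul_eq_smul_of_ker_smul_eq_zero (ha x) (r₂ := 0) (by rw [hσ, map_zero]), zero_smul]
  have σ_add : ∀ x c d, σ (c + d) • a x = σ c • a x + σ d • a x := fun x c d => by
    rw [← add_smul]
    exact smul_eq_smul_of_ker_smul_eq_zero (ha x) (by rw [map_add, hσ, hσ, hσ])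
  have σ_mul : ∀ x r c, σ (φ r * c) • a x = r • σ c • a x := fun x r c => by
    rw [← mul_smul]
    exact smul_eq_smul_of_ker_smul_eq_zero (ha x) (by rw [map_mul, hσ, hσ])
  refine ⟨{ toFun := fun x => (s x).sum fun y c => σ c • a y
            map_add' := fun x y => ?_
            map_smul' := fun r x => ?_ }, LinearMap.ext fun x => ?_⟩
  · rw [map_add]
    exact Finsupp.sum_add_index' (fun y => σ_zero y) (fun y => σ_add y)
  · rw [RingHom.id_apply, hP, map_smul, Finsupp.sum_smul_index' (fun y => σ_zero y),
      Finsupp.smul_sum]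
    exact Finsupp.sum_congr fun y _ => σ_mul y r _
  · calc f ((s x).sum fun y c => σ c • a y)
        = (s x).sum fun y c => g (c • y) := by
          rw [map_finsuppSum]
          refine Finsupp.sum_congr fun y _ => ?_
          rw [map_smul, hfa, ← map_smul, hP, hσ]
      _ = g x := by
          rw [← map_finsuppSum, ← Finsupp.linearCombination_apply]
          exact congrArg g (hs x)

end PullBack

theorem MonoidAlgebra.mapDomain_surjective {R M N : Type*} [Semiring R] {f : M → N}
    (hf : Surjective f) : Surjective (mapDomain (R := R) f) := fun x => by
  obtain ⟨y, hy⟩ := Finsupp.mapDomain_surjective hf x.coeff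
  exact ⟨ofCoeff y, by ext1; simp [mapDomain, hy]⟩

section FixedVectors

variable {G k A B : Type*} [Group G] [Field k] [AddCommGroup A] [Module k[G] A]
  [AddCommGroup B] [Module k[G] B]

theorem single_smul_eq_of_inv_mul_mem {K : Subgroup G} {a : A} (ha : ∀ h ∈ K, of k G h • a = a)
    {g g' : G} (hg : g'⁻¹ * g ∈ K) (c : k) :
    (single g c : k[G]) • a = (single g' c : k[G]) • a := by
  have hsingle : (single g' c : k[G]) * of k G (g'⁻¹ * g) = single g c := by
    rw [of_apply, single_mul_single, mul_one, mul_inv_cancel_left]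
  rw [← hsingle, mul_smul, ha _ hg]

theorem smul_eq_zero_of_mem_ker_mapDomain {H : Subgroup G} [H.Normal] {a : A}
    (ha : ∀ h ∈ H, of k G h • a = a) :
    ∀ r ∈ RingHom.ker (mapDomainRingHom k (QuotientGroup.mk' H)), r • a = 0 := by
  have key : ∀ r : k[G],
      r • a = mapDomain Quotient.out (mapDomainRingHom k (QuotientGroup.mk' H) r) • a := by
    intro r
    induction r using MonoidAlgebra.induction_linear with
    | zero => simp
    | add x y hx hy => rw [add_smul, hx, hy, map_add, mapDomain_add, add_smul]
    | single g c =>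
      rw [mapDomainRingHom_apply, mapDomain_single, mapDomain_single]
      exact single_smul_eq_of_inv_mul_mem ha
        (QuotientGroup.eq.mp (QuotientGroup.out_eq' (QuotientGroup.mk g))) c
  intro r hr
  rw [key, RingHom.mem_ker.mp hr, mapDomain_zero, zero_smul]

theorem of_smul_sum_coset_out_smul {H K : Subgroup G} [Fintype (H ⧸ K.subgroupOf H)] {a : A}
    (ha : ∀ h ∈ K, of k G h • a = a) {h : G} (hh : h ∈ H) :
    of k G h • ∑ q : H ⧸ K.subgroupOf H, of k G (q.out : G) • a
      = ∑ q : H ⧸ K.subgroupOf H, of k G (q.out : G) • a := by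
  rw [Finset.smul_sum]
  refine Fintype.sum_bijective (fun q => (⟨h, hh⟩ : H) • q) (MulAction.bijective _) _ _
    fun q => ?_
  rw [← mul_smul, ← map_mul, of_apply, of_apply]
  refine (single_smul_eq_of_inv_mul_mem ha ?_ 1).symm
  have hq : (QuotientGroup.mk ((⟨h, hh⟩ : H) * q.out) : H ⧸ K.subgroupOf H)
      = QuotientGroup.mk (((⟨h, hh⟩ : H) • q).out) :=
    (MulAction.Quotient.mk_smul_out (K.subgroupOf H) (⟨h, hh⟩ : H) q).trans
      (QuotientGroup.out_eq' _).symm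
  simpa [Subgroup.mem_subgroupOf] using QuotientGroup.eq.mp hq

theorem exists_fixed_preimage_of_relIndex_ne_zero {H K : Subgroup G} (f : A →ₗ[k[G]] B)
    {a₀ : A} (ha₀ : ∀ h ∈ K, of k G h • a₀ = a₀) (hb : ∀ h ∈ H, of k G h • f a₀ = f a₀)
    (hn : (K.relIndex H : k) ≠ 0) : ∃ a, (∀ h ∈ H, of k G h • a = a) ∧ f a = f a₀ := by
  -- `relIndex` is `0` when the index is infinite, so `hn` also makes `H ⧸ K.subgroupOf H` finite.
  let := Subgroup.fintypeOfIndexNeZero (H := K.subgroupOf H) fun h0 => hn (by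
    rw [Subgroup.relIndex, h0, Nat.cast_zero])
  set T := ∑ q : H ⧸ K.subgroupOf H, of k G (q.out : G) • a₀
  have hfT : f T = algebraMap k k[G] (K.relIndex H) • f a₀ := by
    rw [map_natCast, Nat.cast_smul_eq_nsmul, map_sum]
    simp_rw [map_smul, hb _ (Subtype.property _)]
    rw [Finset.sum_const, Finset.card_univ, ← Nat.card_eq_fintype_card, ← Subgroup.index_eq_card,
      Subgroup.relIndex]
  refine ⟨algebraMap k k[G] (K.relIndex H : k)⁻¹ • T, fun h hh => ?_, ?_⟩
  · rw [smul_smul, ← Algebra.commutes, ← smul_smul, of_smul_sum_coset_out_smul ha₀ hh]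
  · rw [map_smul, hfT, smul_smul, ← map_mul, inv_mul_cancel₀ hn, map_one, one_smul]

theorem exists_preimage_ker_smul_eq_zero [TopologicalSpace G] {H : Subgroup G} [H.Normal]
    (hHopen : IsOpen (H : Set G))
    (hchar : ∀ K : Subgroup G, K.Normal → IsOpen (K : Set G) → K ≤ H →
      ¬ (ringChar k : ℕ) ∣ K.relIndex H)
    (hA : ∀ x : A, ∃ K : Subgroup G, K.Normal ∧ IsOpen (K : Set G) ∧
      ∀ h ∈ K, of k G h • x = x)
    (f : A →ₗ[k[G]] B) (hf : Surjective f) {b : B} (hb : ∀ h ∈ H, of k G h • b = b) :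
    ∃ a, (∀ r ∈ RingHom.ker (mapDomainRingHom k (QuotientGroup.mk' H)), r • a = 0) ∧ f a = b := by
  obtain ⟨a₀, rfl⟩ := hf b
  obtain ⟨K, hKn, hKo, ha₀⟩ := hA a₀
  have hn : (K.relIndex H : k) ≠ 0 := by
    rw [Ne, ringChar.spec, ← Subgroup.inf_relIndex_left]
    exact hchar _ (Subgroup.normal_inf_normal H K) (hHopen.inter hKo) inf_le_left
  obtain ⟨a, ha, hfa⟩ := exists_fixed_preimage_of_relIndex_ne_zero f ha₀ hb hn
  exact ⟨a, smul_eq_zero_of_mem_ker_mapDomain ha, hfa⟩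

end FixedVectors

theorem mapDomainRingHom_of_smul_eq_self {G k N : Type*} [Group G] [Field k] {H : Subgroup G}
    [H.Normal] [AddCommGroup N] [Module k[G ⧸ H] N] {h : G} (hh : h ∈ H) (x : N) :
    mapDomainRingHom k (QuotientGroup.mk' H) (of k G h) • x = x := by
  rw [of_apply, mapDomainRingHom_apply, mapDomain_single, QuotientGroup.mk'_apply,
    (QuotientGroup.eq_one_iff h).mpr hh, ← one_def, one_smul]

theorem isDiscreteGModK_compHom {G k : Type} [Group G] [TopologicalSpace G] [Field k]
    {H : Subgroup G} [H.Normal] (hHopen : IsOpen (H : Set G))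
    (N : Type) [AddCommGroup N] [Module k[G ⧸ H] N] :
    letI : Module k[G] N := Module.compHom N (mapDomainRingHom k (QuotientGroup.mk' H))
    IsDiscreteGModK G k (ModuleCat.of k[G] N) :=
  fun x => ⟨H, inferInstance, hHopen, fun _ hh => mapDomainRingHom_of_smul_eq_self hh x⟩

theorem stmt_3_general (G : Type) [Group G] [TopologicalSpace G] (k : Type) [Field k]
    (H : Subgroup G) [H.Normal] (hHopen : IsOpen (H : Set G))
    (hchar : ∀ K : Subgroup G, K.Normal → IsOpen (K : Set G) → K ≤ H →
      ¬ (ringChar k : ℕ) ∣ K.relIndex H)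
    (M : Type) [AddCommGroup M] [Module (MonoidAlgebra k (G ⧸ H)) M] :
    letI : Module (MonoidAlgebra k G) M :=
      Module.compHom M (MonoidAlgebra.mapDomainRingHom k (QuotientGroup.mk' H))
    (IsProjectiveDiscreteGModK G k (ModuleCat.of (MonoidAlgebra k G) M) ↔
      Module.Projective (MonoidAlgebra k (G ⧸ H)) M) := by
  let : Module k[G] M := Module.compHom M (mapDomainRingHom k (QuotientGroup.mk' H))
  have hφ : Surjective (mapDomainRingHom k (QuotientGroup.mk' H)) :=
    mapDomain_surjective (QuotientGroup.mk'_surjective H)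
  constructor
  · intro hM
    let : Module k[G] (M →₀ k[G ⧸ H]) :=
      Module.compHom _ (mapDomainRingHom k (QuotientGroup.mk' H))
    refine Module.projective_of_lifting_property_of_surjective hφ (fun _ _ => rfl)
      (fun _ _ => rfl) fun ε hε => ?_
    exact hM _ _ (isDiscreteGModK_compHom hHopen _) (isDiscreteGModK_compHom hHopen M) ε hε
      LinearMap.id
  · intro hM A B hA _ f hf g
    refine Module.projective_lifting_property_of_ker_smul_eq_zero hφ (fun _ _ => rfl) f g
      fun x => exists_preimage_ker_smul_eq_zero hHopen hchar hA f hf fun h hh => ?_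
    rw [← map_smul]
    exact congrArg g (mapDomainRingHom_of_smul_eq_self hh x)

/-- **(Chirvasitu–Kanda, Corollary 3.4(a).)** Let `G` be a profinite group, `k` a field and
`H` an open normal subgroup of `G` such that `char k` divides no index `[H : K]` for open
normal `K ≤ H` of `G`. A `k[G/H]`-module `M`, regarded as a discrete `G`-module via the
projection `G → G/H`, is a projective object of the category of discrete `G`-modules over `k`
if and only if it is projective as a `k[G/H]`-module. -/
theorem stmt_3 (G : Type) [Group G] [TopologicalSpace G] [IsTopologicalGroup G]
    [CompactSpace G] [T2Space G] [TotallyDisconnectedSpace G] (k : Type) [Field k]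
    (H : Subgroup G) [H.Normal] (hHopen : IsOpen (H : Set G))
    (hchar : ∀ K : Subgroup G, K.Normal → IsOpen (K : Set G) → K ≤ H →
      ¬ (ringChar k : ℕ) ∣ K.relIndex H)
    (M : Type) [AddCommGroup M] [Module (MonoidAlgebra k (G ⧸ H)) M] :
    letI : Module (MonoidAlgebra k G) M :=
      Module.compHom M (MonoidAlgebra.mapDomainRingHom k (QuotientGroup.mk' H))
    (IsProjectiveDiscreteGModK G k (ModuleCat.of (MonoidAlgebra k G) M) ↔
      Module.Projective (MonoidAlgebra k (G ⧸ H)) M) :=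
  stmt_3_general G k H hHopen hchar M
end

section
/- Let G be a profinite group, p a prime, k a field of characteristic p, and H a closed normal subgroup of G such that p divides the supernatural order of H, i.e., there exists an open normal subgroup K of G with p dividing the (finite) index [H : H ∩ K]. Then no non-zero k[G/H]-module, regarded as a discrete G-module over k via the projection G → G/H, is a projective object of the category of discrete G-modules over k. -/
open Function

/-!
Take an open normal subgroup `K` with `p ∣ [H : H ∩ K]`. For a discrete `G`-module `M`, the
functions `G/K → M` with the diagonal action `(g • ψ) x = g • ψ (g⁻¹ x)` form a discrete
`G`-module, and summing over `G/K` is a `G`-equivariant surjection onto `M`. If `M` were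
projective this surjection would have a section `s`. When `H` acts trivially on `M`, every
`s m` is `H`-invariant, hence constant on the `H`-orbits of `G/K`; each orbit has
`[H : H ∩ K]` elements, a multiple of `p`, so in characteristic `p` we get `m = Σ (s m) = 0`.
-/

open MonoidAlgebra

theorem MulAction.sum_eq_zero_of_dvd_card_orbit {H X A : Type*} [Group H] [MulAction H X]
    [Fintype X] [AddCommMonoid A] {p : ℕ} (hA : ∀ a : A, p • a = 0)
    (horbit : ∀ x : X, p ∣ Nat.card (orbit H x)) {ψ : X → A}
    (hψ : ∀ (h : H) (x : X), ψ (h • x) = ψ x) :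
    ∑ x, ψ x = 0 := by
  classical
  rw [← (selfEquivSigmaOrbits H X).symm.sum_comp, Fintype.sum_sigma]
  refine Finset.sum_eq_zero fun ω _ => ?_
  obtain ⟨c, hc⟩ := horbit ω.out
  calc ∑ y : orbit H ω.out, ψ y = ∑ _y : orbit H ω.out, ψ ω.out :=
        Finset.sum_congr rfl fun ⟨_, h, hy⟩ _ => hy ▸ hψ h _
    _ = Nat.card (orbit H ω.out) • ψ ω.out := by
        rw [Finset.sum_const, Finset.card_univ, Nat.card_eq_fintype_card]
    _ = 0 := by rw [hc, mul_comm, mul_nsmul, hA]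

theorem QuotientGroup.smul_eq_self_iff {G : Type*} [Group G] {K : Subgroup G} [K.Normal]
    {g : G} {x : G ⧸ K} : g • x = x ↔ g ∈ K := by
  induction x using QuotientGroup.induction_on with
  | H y =>
    rw [MulAction.Quotient.smul_mk, smul_eq_mul, QuotientGroup.mk_mul, mul_eq_right,
      QuotientGroup.eq_one_iff]

theorem QuotientGroup.card_orbit_eq_relIndex {G : Type*} [Group G] (H K : Subgroup G) [K.Normal]
    (x : G ⧸ K) : Nat.card (MulAction.orbit H x) = (H ⊓ K).relIndex H := by
  rw [Nat.card_coe_set_eq, ← MulAction.index_stabilizer, Subgroup.relIndex]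
  congr 1
  ext h
  rw [MulAction.mem_stabilizer_iff, Subgroup.mem_subgroupOf, Subgroup.mem_inf]
  change (h : G) • x = x ↔ _
  rw [QuotientGroup.smul_eq_self_iff]
  exact ⟨fun hK => ⟨h.2, hK⟩, And.right⟩

theorem MonoidAlgebra.mapDomainRingHom_of {k G G' : Type*} [Semiring k] [Monoid G] [Monoid G']
    (f : G →* G') (g : G) : mapDomainRingHom k f (of k G g) = of k G' (f g) := by
  simp

namespace Representation

section

variable {k G V M : Type*} [CommSemiring k] [Group G] [AddCommMonoid V] [Module k V]
  [AddCommMonoid M] [Module k M] [Module k[G] M] [IsScalarTower k k[G] M]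

def arrow (X : Type*) [MulAction G X] (ρ : Representation k G V) :
    Representation k G (X → V) where
  toFun g :=
    { toFun ψ x := ρ g (ψ (g⁻¹ • x))
      map_add' _ _ := funext fun _ => map_add _ _ _
      map_smul' _ _ := funext fun _ => map_smul _ _ _ }
  map_one' := by ext; simp
  map_mul' _ _ := by ext; simp [mul_smul]

@[simp]
theorem arrow_apply {X : Type*} [MulAction G X] (ρ : Representation k G V) (g : G) (ψ : X → V)
    (x : X) : arrow X ρ g ψ x = ρ g (ψ (g⁻¹ • x)) := rfl

theorem asModuleEquiv_of_smul (ρ : Representation k G V) (g : G) (v : ρ.asModule) :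
    ρ.asModuleEquiv (of k G g • v) = ρ g (ρ.asModuleEquiv v) := by
  rw [asModuleEquiv_map_smul, asAlgebraHom_of]

@[simp]
theorem ofModule'_apply (g : G) (m : M) : ofModule' (k := k) (G := G) M g m = of k G g • m := by
  simp [ofModule']

def asModuleLinearMap (ρ : Representation k G V) (f : V →ₗ[k] M)
    (hf : ∀ g v, f (ρ g v) = of k G g • f v) : ρ.asModule →ₗ[k[G]] M where
  toFun v := f (ρ.asModuleEquiv v)
  map_add' _ _ := by simp
  map_smul' r v := by
    induction r using MonoidAlgebra.induction_on with
    | of g =>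
      change f (ρ.asModuleEquiv (of k G g • v)) = of k G g • f (ρ.asModuleEquiv v)
      rw [asModuleEquiv_of_smul, hf]
    | add r s hr hs => simp_all [add_smul]
    | smul c r hr =>
      simp only [RingHom.id_apply] at hr ⊢
      rw [smul_assoc, map_smul, map_smul, hr, smul_assoc]

variable (k G M) (X : Type*) [MulAction G X]

abbrev arrowModule : Type _ := (arrow X (ofModule' (k := k) (G := G) M)).asModule

variable [Fintype X]

noncomputable def arrowSum : arrowModule k G M X →ₗ[k[G]] M :=
  asModuleLinearMap _ (∑ x, LinearMap.proj x) fun g ψ => by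
    simp only [LinearMap.coe_sum, LinearMap.coe_proj, Finset.sum_apply, Function.eval,
      arrow_apply, ofModule'_apply, Finset.smul_sum]
    exact Equiv.sum_comp (MulAction.toPerm g⁻¹) (fun x => of k G g • ψ x)

variable {k G M X}

theorem arrowSum_apply (ψ : arrowModule k G M X) :
    arrowSum k G M X ψ = ∑ x, (arrow X (ofModule' M)).asModuleEquiv ψ x := by
  simp [arrowSum, asModuleLinearMap]

theorem arrowSum_surjective [Nonempty X] : Surjective (arrowSum k G M X) := by
  classical
  intro m
  obtain ⟨x₀⟩ := ‹Nonempty X›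
  refine ⟨(arrow X (ofModule' M)).asModuleEquiv.symm (Pi.single x₀ m), ?_⟩
  rw [arrowSum_apply, LinearEquiv.apply_symm_apply, Finset.sum_pi_single']
  simp

theorem arrowSum_eq_zero_of_forall_smul_eq_self (H : Subgroup G) {p : ℕ}
    (hM : ∀ m : M, p • m = 0) (hX : ∀ x : X, p ∣ Nat.card (MulAction.orbit H x))
    (hH : ∀ h ∈ H, ∀ m : M, of k G h • m = m)
    {ψ : arrowModule k G M X} (hψ : ∀ h ∈ H, of k G h • ψ = ψ) :
    arrowSum k G M X ψ = 0 := by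
  rw [arrowSum_apply]
  refine MulAction.sum_eq_zero_of_dvd_card_orbit hM hX fun h x => ?_
  set e := (arrow X (ofModule' (k := k) (G := G) M)).asModuleEquiv
  calc e ψ ((h : G) • x) = e (of k G h • ψ) ((h : G) • x) := by rw [hψ h h.2]
    _ = of k G h • e ψ x := by
      rw [asModuleEquiv_of_smul, arrow_apply, ofModule'_apply, inv_smul_smul]
    _ = e ψ x := hH h h.2 _

end

theorem isDiscreteGModK_arrowModule {k G M X : Type} [Field k] [Group G] [TopologicalSpace G]
    [AddCommGroup M] [Module k M] [Module k[G] M] [IsScalarTower k k[G] M] [MulAction G X]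
    [Finite X] (hM : IsDiscreteGModK G k (ModuleCat.of k[G] M))
    {K : Subgroup G} (hKn : K.Normal) (hKo : IsOpen (K : Set G))
    (hKX : ∀ g ∈ K, ∀ x : X, g • x = x) :
    IsDiscreteGModK G k (ModuleCat.of k[G] (arrowModule k G M X)) := by
  intro ψ
  set e := (arrow X (ofModule' (k := k) (G := G) M)).asModuleEquiv
  choose L hLn hLo hL using fun x => hM (e ψ x)
  refine ⟨K ⊓ ⨅ x, L x, Subgroup.normal_inf_normal _ _ (hK := Subgroup.normal_iInf_normal hLn),
    ?_, ?_⟩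
  · rw [Subgroup.coe_inf, Subgroup.coe_iInf]
    exact hKo.inter (isOpen_iInter_of_finite hLo)
  · rintro g ⟨hgK, hgL⟩
    refine e.injective (funext fun x => ?_)
    rw [asModuleEquiv_of_smul, arrow_apply, ofModule'_apply, hKX _ (inv_mem hgK)]
    exact hL x g (Subgroup.mem_iInf.1 hgL x)

end Representation

open Representation in
theorem not_isProjectiveDiscreteGModK_of_forall_smul_eq_self (G : Type) [Group G]
    [TopologicalSpace G] [SeparatelyContinuousMul G] [CompactSpace G] (p : ℕ) (k : Type)
    [Field k] [CharP k p] (H K : Subgroup G) [K.Normal] (hKo : IsOpen (K : Set G))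
    (hpK : p ∣ (H ⊓ K).relIndex H) (M : Type) [AddCommGroup M] [Module k[G] M] [Nontrivial M]
    (hH : ∀ h ∈ H, ∀ m : M, of k G h • m = m) (hM : IsDiscreteGModK G k (ModuleCat.of k[G] M)) :
    ¬ IsProjectiveDiscreteGModK G k (ModuleCat.of k[G] M) := by
  intro hproj
  let _ : Module k M := Module.compHom M (algebraMap k k[G])
  have _ : IsScalarTower k k[G] M := IsScalarTower.of_algebraMap_smul fun _ _ => rfl
  have := K.quotient_finite_of_isOpen hKo
  let _ := Fintype.ofFinite (G ⧸ K)
  obtain ⟨s, hs⟩ := hproj _ _ (isDiscreteGModK_arrowModule hM ‹K.Normal› hKo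
    fun _ hg _ => QuotientGroup.smul_eq_self_iff.2 hg) hM (arrowSum k G M (G ⧸ K))
    arrowSum_surjective LinearMap.id
  obtain ⟨m, hm⟩ := exists_ne (0 : M)
  refine hm ?_
  rw [← LinearMap.id_apply (R := k[G]) m, ← hs]
  refine arrowSum_eq_zero_of_forall_smul_eq_self H (p := p) (fun m => ?_) (fun x => ?_) hH
    fun h hh => ?_
  · rw [← Nat.cast_smul_eq_nsmul k, CharP.cast_eq_zero, zero_smul]
  · exact QuotientGroup.card_orbit_eq_relIndex H K x ▸ hpK
  · change of k G h • s m = s m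
    rw [← map_smul s, hH h hh]

theorem stmt_4_general (G : Type) [Group G] [TopologicalSpace G] [IsTopologicalGroup G]
    [CompactSpace G]
    (p : ℕ) (k : Type) [Field k] [CharP k p]
    (H : Subgroup G) [H.Normal]
    (hdvd : ∃ K : Subgroup G, K.Normal ∧ IsOpen (K : Set G) ∧ p ∣ (H ⊓ K).relIndex H)
    (M : Type) [AddCommGroup M] [Module (MonoidAlgebra k (G ⧸ H)) M] :
    letI : Module (MonoidAlgebra k G) M :=
      Module.compHom M (MonoidAlgebra.mapDomainRingHom k (QuotientGroup.mk' H))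
    IsDiscreteGModK G k (ModuleCat.of (MonoidAlgebra k G) M) → Nontrivial M →
      ¬ IsProjectiveDiscreteGModK G k (ModuleCat.of (MonoidAlgebra k G) M) := by
  let _ : Module k[G] M := Module.compHom M (mapDomainRingHom k (QuotientGroup.mk' H))
  intro hM _
  obtain ⟨K, hKn, hKo, hpK⟩ := hdvd
  refine not_isProjectiveDiscreteGModK_of_forall_smul_eq_self G p k H K hKo hpK M
    (fun h hh m => ?_) hM
  change mapDomainRingHom k (QuotientGroup.mk' H) (of k G h) • m = m
  rw [mapDomainRingHom_of, QuotientGroup.mk'_apply, (QuotientGroup.eq_one_iff h).2 hh, map_one,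
    one_smul]

/-- **(Chirvasitu–Kanda, Lemma 3.6.)** Let `G` be a profinite group, `p` a prime, `k` a field
of characteristic `p`, and `H` a closed normal subgroup of `G` such that `p` divides the
supernatural order of `H`, i.e. there is an open normal subgroup `K` of `G` with
`p ∣ [H : H ∩ K]`. Then no non-zero `k[G/H]`-module, regarded as a discrete `G`-module over
`k` via the projection `G → G/H`, is a projective object of the category of discrete
`G`-modules over `k`. -/
theorem stmt_4 (G : Type) [Group G] [TopologicalSpace G] [IsTopologicalGroup G]
    [CompactSpace G] [T2Space G] [TotallyDisconnectedSpace G]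
    (p : ℕ) (hp : p.Prime) (k : Type) [Field k] [CharP k p]
    (H : Subgroup G) [H.Normal] (hHclosed : IsClosed (H : Set G))
    (hdvd : ∃ K : Subgroup G, K.Normal ∧ IsOpen (K : Set G) ∧ p ∣ (H ⊓ K).relIndex H)
    (M : Type) [AddCommGroup M] [Module (MonoidAlgebra k (G ⧸ H)) M] :
    letI : Module (MonoidAlgebra k G) M :=
      Module.compHom M (MonoidAlgebra.mapDomainRingHom k (QuotientGroup.mk' H))
    IsDiscreteGModK G k (ModuleCat.of (MonoidAlgebra k G) M) → Nontrivial M →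
      ¬ IsProjectiveDiscreteGModK G k (ModuleCat.of (MonoidAlgebra k G) M) :=
  stmt_4_general G p k H hdvd M
end

section
/- Let R be a ring and 𝓘 a downward filtered set of two-sided ideals of R. Suppose that for each I ∈ 𝓘, ⋂_J ((J : I) + I) = I, where J runs over all ideals in 𝓘 with J ⊆ I. Then the category 𝒞 of 𝓘-discrete R-modules has no non-zero projective objects. -/
open Function Pointwise
open scoped DirectSum

/-- For left ideals `J I` of `R`, the set `(J : I) = {r : R | I·r ⊆ J}` (a two-sided ideal
when `J` and `I` are two-sided). -/
def idealColon (R : Type) [Ring R] (J I : Ideal R) : Set R :=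
  {r : R | ∀ i ∈ I, i * r ∈ J}

/-- A left `R`-module is *`𝓘`-discrete* if each element is annihilated by some `I ∈ 𝓘`. -/
def IsDiscreteIMod (R : Type) [Ring R] (𝓘 : Set (Ideal R)) (M : ModuleCat.{0} R) : Prop :=
  ∀ x : M, ∃ I ∈ 𝓘, ∀ r ∈ I, r • x = (0 : M)

/-- `P` is a projective object of the category of `𝓘`-discrete left `R`-modules. -/
def IsProjectiveDiscreteIMod (R : Type) [Ring R] (𝓘 : Set (Ideal R))
    (P : ModuleCat.{0} R) : Prop :=
  ∀ (M N : ModuleCat.{0} R), IsDiscreteIMod R 𝓘 M → IsDiscreteIMod R 𝓘 N →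
    ∀ f : M →ₗ[R] N, Surjective f →
      ∀ g : P →ₗ[R] N, ∃ h : P →ₗ[R] M, f.comp h = g

/-- **(Chirvasitu–Kanda, Theorem 4.2(a).)** Let `R` be a ring and `𝓘` a downward filtered set
of two-sided ideals of `R` such that `⋂_{J ∈ 𝓘, J ⊆ I} ((J : I) + I) = I` for every `I ∈ 𝓘`.
Then the category of `𝓘`-discrete left `R`-modules has no non-zero projective objects. -/
theorem stmt_5 (R : Type) [Ring R] (𝓘 : Set (Ideal R))
    (htwosided : ∀ I ∈ 𝓘, ∀ a ∈ I, ∀ r : R, a * r ∈ I)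
    (hne : 𝓘.Nonempty)
    (hfil : ∀ I₁ ∈ 𝓘, ∀ I₂ ∈ 𝓘, ∃ J ∈ 𝓘, J ≤ I₁ ∧ J ≤ I₂)
    (hcond : ∀ I ∈ 𝓘,
      (⋂ J ∈ {J : Ideal R | J ∈ 𝓘 ∧ J ≤ I}, (idealColon R J I + (I : Set R))) = (I : Set R)) :
    ¬ ∃ P : ModuleCat.{0} R,
        IsDiscreteIMod R 𝓘 P ∧ Nontrivial P ∧ IsProjectiveDiscreteIMod R 𝓘 P := by
  classical
  rintro ⟨P, hPdisc, hPnt, hPproj⟩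
  obtain ⟨x₀, hx₀⟩ := exists_ne (0 : P)
  obtain ⟨I, hI𝓘, hIx₀⟩ := hPdisc x₀
  obtain ⟨I0, hI0⟩ := hne
  -- A presentation of `P` with component ideals in `𝓘`, below a given `T ∈ 𝓘`,
  -- together with a section coming from projectivity of `P`.
  have present : ∀ T : Ideal R, T ∈ 𝓘 → ∃ (L : P → Ideal R)
      (p : (⨁ y : P, R ⧸ L y) →ₗ[R] P) (s : P →ₗ[R] ⨁ y : P, R ⧸ L y),
      (∀ y, L y ∈ 𝓘) ∧ (∀ y, L y ≤ T) ∧ (∀ y, ∀ r ∈ L y, r • y = (0 : P)) ∧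
      (∀ x, p (s x) = x) := by
    intro T hT
    have hchoose : ∀ y : P, ∃ L : Ideal R, L ∈ 𝓘 ∧ L ≤ T ∧ ∀ r ∈ L, r • y = (0 : P) := by
      intro y
      obtain ⟨A, hA𝓘, hAy⟩ := hPdisc y
      obtain ⟨L, hL𝓘, hLA, hLT⟩ := hfil A hA𝓘 T hT
      exact ⟨L, hL𝓘, hLT, fun r hr => hAy r (hLA hr)⟩
    choose L hL𝓘 hLT hLann using hchoose
    -- component maps `R ⧸ L y →ₗ[R] P`, `r ↦ r • y`
    have hker : ∀ y : P, L y ≤ LinearMap.ker (LinearMap.toSpanSingleton R P y) := by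
      intro y r hr
      simpa using hLann y r hr
    let p : (⨁ y : P, R ⧸ L y) →ₗ[R] P :=
      DirectSum.toModule R P P (fun y => Submodule.liftQ (L y)
        (LinearMap.toSpanSingleton R P y) (hker y))
    have hpof : ∀ (y : P) (r : R),
        p (DirectSum.lof R P (fun y => R ⧸ L y) y (Submodule.Quotient.mk r)) = r • y := by
      intro y r
      rw [DirectSum.toModule_lof]
      rfl
    have hpsurj : Surjective p := by
      intro x
      exact ⟨DirectSum.lof R P (fun y => R ⧸ L y) x (Submodule.Quotient.mk 1), by
        rw [hpof]; exact one_smul _ _⟩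
    -- the direct sum is discrete
    have hMdisc : IsDiscreteIMod R 𝓘 (ModuleCat.of R (⨁ y : P, R ⧸ L y)) := by
      intro w
      induction w using DirectSum.induction_on with
      | zero => exact ⟨I0, hI0, fun r _ => smul_zero r⟩
      | of y v =>
        refine ⟨L y, hL𝓘 y, fun r hr => ?_⟩
        obtain ⟨a, rfl⟩ := Submodule.Quotient.mk_surjective (L y) v
        have hza : r • (Submodule.Quotient.mk a : R ⧸ L y) = 0 := by
          rw [← Submodule.Quotient.mk_smul, Submodule.Quotient.mk_eq_zero, smul_eq_mul]
          exact htwosided (L y) (hL𝓘 y) r hr a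
        have : r • DirectSum.of (fun y => R ⧸ L y) y (Submodule.Quotient.mk a)
            = DirectSum.of (fun y => R ⧸ L y) y (r • (Submodule.Quotient.mk a : R ⧸ L y)) := by
          rw [← DirectSum.lof_eq_of R, ← map_smul, DirectSum.lof_eq_of]
        rw [this, hza, map_zero]
      | add w₁ w₂ ih₁ ih₂ =>
        obtain ⟨I₁, hI₁, h₁⟩ := ih₁
        obtain ⟨I₂, hI₂, h₂⟩ := ih₂
        obtain ⟨J, hJ, hJ₁, hJ₂⟩ := hfil I₁ hI₁ I₂ hI₂
        refine ⟨J, hJ, fun r hr => ?_⟩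
        rw [smul_add, h₁ r (hJ₁ hr), h₂ r (hJ₂ hr), add_zero]
    obtain ⟨s, hs⟩ := hPproj (ModuleCat.of R (⨁ y : P, R ⧸ L y)) P hMdisc hPdisc
      p hpsurj LinearMap.id
    refine ⟨L, p, s, hL𝓘, hLT, hLann, fun x => ?_⟩
    have := congrArg (fun f : P →ₗ[R] P => f x) hs
    simpa using this
  -- First presentation, with target ideal `I`.
  obtain ⟨L, p, s, hL𝓘, hLI, hLann, hps⟩ := present I hI𝓘
  have hsx₀ : s x₀ ≠ 0 := by
    intro h
    exact hx₀ (by rw [← hps x₀, h, map_zero])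
  obtain ⟨y₀, hy₀⟩ : ∃ y₀ : P, s x₀ y₀ ≠ 0 := by
    by_contra h
    push_neg at h
    exact hsx₀ (DFinsupp.ext h)
  set K : Ideal R := L y₀ with hK
  obtain ⟨c, hc⟩ := Submodule.Quotient.mk_surjective K (s x₀ y₀)
  have hcK : c ∉ K := by
    intro h
    apply hy₀
    rw [← hc, Submodule.Quotient.mk_eq_zero]
    exact h
  -- the projection onto the `y₀` component
  let π : (⨁ y : P, R ⧸ L y) →ₗ[R] (R ⧸ K) :=
    { toFun := fun v => v y₀
      map_add' := fun a b => DirectSum.add_apply a b y₀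
      map_smul' := fun r v => DirectSum.smul_apply r v y₀ }
  -- Main claim: `c ∈ (J : K) + K` for every `J ∈ 𝓘`.
  have hmain : ∀ J ∈ 𝓘, c ∈ idealColon R J K + (K : Set R) := by
    intro J hJ𝓘
    obtain ⟨L', p', s', hL'𝓘, hL'J, hL'ann, hp's⟩ := present J hJ𝓘
    set w : ⨁ y : P, R ⧸ L' y := s' x₀ with hw
    have hIw : ∀ r ∈ I, r • w = 0 := by
      intro r hr
      rw [hw, ← map_smul, hIx₀ r hr, map_zero]
    set φ : (⨁ y : P, R ⧸ L' y) →ₗ[R] (R ⧸ K) := π ∘ₗ s ∘ₗ p' with hφ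
    have hφw : φ w = Submodule.Quotient.mk c := by
      rw [hφ, hc]
      simp only [LinearMap.comp_apply]
      rw [hw, hp's x₀]
      rfl
    -- each component of the image lands in the colon ideal, modulo `K`
    have hcomp : ∀ y : P, ∃ d ∈ idealColon R J K,
        φ (DirectSum.of (fun y => R ⧸ L' y) y (w y)) = Submodule.Quotient.mk d := by
      intro y
      obtain ⟨t, ht⟩ := Submodule.Quotient.mk_surjective (L' y) (w y)
      have htJ : ∀ r ∈ I, r * t ∈ J := by
        intro r hr
        apply hL'J y
        rw [← Submodule.Quotient.mk_eq_zero (L' y)]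
        have h3 : (Submodule.Quotient.mk (r * t) : R ⧸ L' y) = r • (w y) := by
          rw [← ht, ← Submodule.Quotient.mk_smul, smul_eq_mul]
        rw [h3]
        have := congrArg (fun v : ⨁ y : P, R ⧸ L' y => v y) (hIw r hr)
        simpa [DirectSum.smul_apply] using this
      obtain ⟨u, hu⟩ := Submodule.Quotient.mk_surjective K
        (φ (DirectSum.of (fun y => R ⧸ L' y) y (Submodule.Quotient.mk 1)))
      refine ⟨t * u, ?_, ?_⟩
      · intro i hiK
        have h1 : i * t ∈ J := htJ i (hLI y₀ hiK)
        rw [← mul_assoc]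
        exact htwosided J hJ𝓘 (i * t) h1 u
      · have h2 : (w y) = (t : R) • (Submodule.Quotient.mk 1 : R ⧸ L' y) := by
          rw [← ht, ← Submodule.Quotient.mk_smul, smul_eq_mul, mul_one]
        rw [h2, ← DirectSum.lof_eq_of R, map_smul, map_smul, DirectSum.lof_eq_of, ← hu,
          ← Submodule.Quotient.mk_smul, smul_eq_mul]
    choose d hd hφd using hcomp
    have hsum : φ w = Submodule.Quotient.mk (∑ y ∈ DFinsupp.support w, d y) := by
      conv_lhs => rw [← DirectSum.sum_support_of w]
      rw [map_sum]
      rw [Finset.sum_congr rfl (fun y _ => hφd y)]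
      exact (map_sum (Submodule.mkQ K) d (DFinsupp.support w)).symm
    set D : R := ∑ y ∈ DFinsupp.support w, d y with hD
    have hDcolon : D ∈ idealColon R J K := by
      rw [hD]
      intro i hiK
      rw [Finset.mul_sum]
      exact Ideal.sum_mem J (fun y _ => by
        have := hd y i hiK
        exact this)
    have hcD : c - D ∈ K := by
      rw [← Submodule.Quotient.eq K]
      rw [← hφw, hsum]
    have : D + (c - D) = c := by abel
    rw [← this]
    exact Set.add_mem_add hDcolon hcD
  -- apply the condition at `K`
  apply hcK
  have : c ∈ (K : Set R) := by
    rw [← hcond K (hL𝓘 y₀)]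
    refine Set.mem_iInter₂.mpr ?_
    rintro J ⟨hJ𝓘, -⟩
    exact hmain J hJ𝓘
  exact this
end

section
/- Let R be a ring and 𝓘 a downward filtered set of two-sided ideals of R containing at least one proper ideal. Suppose that for each I ∈ 𝓘, ⋂_J ((J : I) + I) = I, where J runs over all ideals in 𝓘 with J ⊆ I. Then the category 𝒞 of 𝓘-discrete R-modules does not satisfy Ab4*: there is a family of epimorphisms in 𝒞 whose product, computed in 𝒞, is not an epimorphism. -/
open Function Pointwise

/-- An element of a plain product of modules lies in the largest `𝓘`-discrete submodule of
the product (the product computed in the category of `𝓘`-discrete modules) iff it is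
annihilated componentwise by a single `K ∈ 𝓘`. -/
def KilledBySomeIdeal (R : Type) [Ring R] (𝓘 : Set (Ideal R)) {ι : Type}
    (M : ι → ModuleCat.{0} R) (x : ∀ i, M i) : Prop :=
  ∃ K ∈ 𝓘, ∀ i, ∀ r ∈ K, r • x i = (0 : M i)

/-- Auxiliary: the canonical surjection `R/J → R/C` for `J ≤ C`, as an `R`-linear map. -/
def quotMapAux (R : Type) [Ring R] (J C : Ideal R) (h : J ≤ C) :
    (R ⧸ J) →ₗ[R] (R ⧸ C) :=
  Submodule.mapQ J C LinearMap.id (by rwa [Submodule.comap_id])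

lemma quotMapAux_mk (R : Type) [Ring R] (J C : Ideal R) (h : J ≤ C) (r : R) :
    quotMapAux R J C h (Submodule.Quotient.mk r) = Submodule.Quotient.mk r := by
  simp [quotMapAux, Submodule.mapQ_apply]

/-- **(Chirvasitu–Kanda, Theorem 4.2(b).)** Let `R` be a ring and `𝓘` a downward filtered set
of two-sided ideals of `R`, containing a proper ideal, such that
`⋂_{J ∈ 𝓘, J ⊆ I} ((J : I) + I) = I` for every `I ∈ 𝓘`. Then the category of `𝓘`-discrete
left `R`-modules does not satisfy Ab4*: there is a family of epimorphisms whose product,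
computed in the category of `𝓘`-discrete modules, is not an epimorphism. -/
theorem stmt_6 (R : Type) [Ring R] (𝓘 : Set (Ideal R))
    (htwosided : ∀ I ∈ 𝓘, ∀ a ∈ I, ∀ r : R, a * r ∈ I)
    (hne : 𝓘.Nonempty)
    (hproper : ∃ I ∈ 𝓘, I ≠ ⊤)
    (hfil : ∀ I₁ ∈ 𝓘, ∀ I₂ ∈ 𝓘, ∃ J ∈ 𝓘, J ≤ I₁ ∧ J ≤ I₂)
    (hcond : ∀ I ∈ 𝓘,
      (⋂ J ∈ {J : Ideal R | J ∈ 𝓘 ∧ J ≤ I}, (idealColon R J I + (I : Set R))) = (I : Set R)) :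
    ¬ (∀ (ι : Type) (M N : ι → ModuleCat.{0} R),
        (∀ i, IsDiscreteIMod R 𝓘 (M i)) → (∀ i, IsDiscreteIMod R 𝓘 (N i)) →
        ∀ f : ∀ i, M i →ₗ[R] N i, (∀ i, Surjective (f i)) →
        ∀ y : ∀ i, N i, KilledBySomeIdeal R 𝓘 N y →
          ∃ x : ∀ i, M i, KilledBySomeIdeal R 𝓘 M x ∧ ∀ i, f i (x i) = y i) := by
  intro H
  -- Step 1: the key combinatorial lemma (†):
  -- there is `I₀ ∈ 𝓘` such that for every `K ∈ 𝓘` there is `J ∈ 𝓘` with `1 ∉ (J:K) + I₀`.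
  have dagger : ∃ I₀ ∈ 𝓘, ∀ K ∈ 𝓘, ∃ J ∈ 𝓘,
      (1 : R) ∉ idealColon R J K + (I₀ : Set R) := by
    by_contra hd
    push_neg at hd
    -- hd : ∀ I₀ ∈ 𝓘, ∃ K ∈ 𝓘, ∀ J ∈ 𝓘, 1 ∈ (J:K) + I₀
    obtain ⟨C₀, hC₀, hC₀top⟩ := hproper
    obtain ⟨K₀, hK₀, hbad₀⟩ := hd C₀ hC₀
    obtain ⟨C₁, hC₁mem, hC₁K₀, hC₁C₀⟩ := hfil K₀ hK₀ C₀ hC₀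
    -- badness of C₀ is downward stable in the second argument: C₁ ≤ K₀
    have hbad₀' : ∀ J ∈ 𝓘, (1 : R) ∈ idealColon R J C₁ + (C₀ : Set R) := by
      intro J hJ
      obtain ⟨c, hc, b, hb, hcb⟩ := Set.mem_add.mp (hbad₀ J hJ)
      exact Set.mem_add.mpr ⟨c, fun i hi => hc i (hC₁K₀ hi), b, hb, hcb⟩
    obtain ⟨C₂, hC₂mem, hbad₁⟩ := hd C₁ hC₁mem
    -- Key step: any element conducting C₁ into C₂ already lies in C₁.
    have key : ∀ c : R, (∀ κ ∈ C₁, κ * c ∈ C₂) → c ∈ C₁ := by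
      intro c hc
      have hmem : c ∈ (C₁ : Set R) := by
        rw [← hcond C₁ hC₁mem]
        refine Set.mem_iInter₂.mpr ?_
        rintro J ⟨hJmem, hJle⟩
        obtain ⟨d, hd', β, hβ, hdβ⟩ := Set.mem_add.mp (hbad₁ J hJmem)
        refine Set.mem_add.mpr ⟨c * d, ?_, c * β, C₁.mul_mem_left c hβ, ?_⟩
        · intro κ hκ
          have h1 : (κ * c) * d ∈ J := hd' _ (hc κ hκ)
          simpa [mul_assoc] using h1
        · rw [← mul_add, hdβ, mul_one]
      exact hmem
    -- Apply badness of (C₀, C₁) at J := C₂ and conclude 1 ∈ C₀.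
    obtain ⟨c, hc, b, hb, hcb⟩ := Set.mem_add.mp (hbad₀' C₂ hC₂mem)
    have hcC₁ : c ∈ C₁ := key c (fun κ hκ => hc κ hκ)
    have hone : (1 : R) ∈ C₀ := by
      rw [← hcb]
      exact C₀.add_mem (hC₁C₀ hcC₁) hb
    exact hC₀top ((Ideal.eq_top_iff_one C₀).mpr hone)
  obtain ⟨I₀, hI₀, hdag⟩ := dagger
  classical
  -- Step 2: the counterexample family, indexed by the members of 𝓘.
  set ι' : Type := {J : Ideal R // J ∈ 𝓘} with hι'
  set Mfam : ι' → ModuleCat.{0} R := fun J => ModuleCat.of R (R ⧸ J.1) with hMfam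
  set Nfam : ι' → ModuleCat.{0} R := fun J => ModuleCat.of R (R ⧸ (J.1 ⊔ I₀)) with hNfam
  have hMdisc : ∀ J : ι', IsDiscreteIMod R 𝓘 (Mfam J) := by
    intro J x
    obtain ⟨r, rfl⟩ := Submodule.Quotient.mk_surjective J.1 x
    refine ⟨J.1, J.2, fun s hs => ?_⟩
    show s • (Submodule.Quotient.mk r : R ⧸ J.1) = 0
    rw [← Submodule.Quotient.mk_smul, Submodule.Quotient.mk_eq_zero]
    show s • r ∈ J.1
    rw [smul_eq_mul]
    exact htwosided J.1 J.2 s hs r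
  have hNdisc : ∀ J : ι', IsDiscreteIMod R 𝓘 (Nfam J) := by
    intro J x
    obtain ⟨r, rfl⟩ := Submodule.Quotient.mk_surjective (J.1 ⊔ I₀) x
    refine ⟨J.1, J.2, fun s hs => ?_⟩
    show s • (Submodule.Quotient.mk r : R ⧸ (J.1 ⊔ I₀)) = 0
    rw [← Submodule.Quotient.mk_smul, Submodule.Quotient.mk_eq_zero]
    refine le_sup_left (a := J.1) (b := I₀) ?_
    show s • r ∈ J.1
    rw [smul_eq_mul]
    exact htwosided J.1 J.2 s hs r
  set ffam : ∀ J : ι', Mfam J →ₗ[R] Nfam J :=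
    fun J => quotMapAux R J.1 (J.1 ⊔ I₀) le_sup_left with hffam
  have hsurj : ∀ J : ι', Surjective (ffam J) := by
    intro J y
    obtain ⟨s, rfl⟩ := Submodule.Quotient.mk_surjective (J.1 ⊔ I₀) y
    exact ⟨Submodule.Quotient.mk s, quotMapAux_mk R J.1 (J.1 ⊔ I₀) le_sup_left s⟩
  set yfam : ∀ J : ι', Nfam J := fun J => Submodule.Quotient.mk 1 with hyfam
  have hy : KilledBySomeIdeal R 𝓘 Nfam yfam := by
    refine ⟨I₀, hI₀, fun J r hr => ?_⟩
    show r • (Submodule.Quotient.mk 1 : R ⧸ (J.1 ⊔ I₀)) = 0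
    rw [← Submodule.Quotient.mk_smul, Submodule.Quotient.mk_eq_zero]
    refine le_sup_right (a := J.1) (b := I₀) ?_
    show r • (1 : R) ∈ I₀
    rw [smul_eq_mul, mul_one]
    exact hr
  obtain ⟨x, hxkill, hlift⟩ := H ι' Mfam Nfam hMdisc hNdisc ffam hsurj yfam hy
  obtain ⟨K, hK, hxk⟩ := hxkill
  obtain ⟨J, hJ, hJno⟩ := hdag K hK
  set i : ι' := ⟨J, hJ⟩ with hidef
  obtain ⟨r, hr⟩ := Submodule.Quotient.mk_surjective J (x i)
  -- From the lifting condition: r - 1 ∈ J ⊔ I₀.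
  have hft : ffam i (x i) = yfam i := hlift i
  rw [← hr] at hft
  have hft' : (Submodule.Quotient.mk r : R ⧸ (J ⊔ I₀)) = Submodule.Quotient.mk 1 := by
    have := quotMapAux_mk R J (J ⊔ I₀) le_sup_left r
    rw [← this]
    exact hft
  have hsub : r - 1 ∈ J ⊔ I₀ := (Submodule.Quotient.eq _).mp hft'
  obtain ⟨j, hj, b, hb, hjb⟩ := Submodule.mem_sup.mp hsub
  -- From the annihilation condition: K * r ⊆ J.
  have hcol : ∀ κ ∈ K, κ * r ∈ J := by
    intro κ hκ
    have h1 : κ • x i = 0 := hxk i κ hκ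
    rw [← hr] at h1
    have h2 : (Submodule.Quotient.mk (κ • r) : R ⧸ J) = 0 := by
      rw [Submodule.Quotient.mk_smul]; exact h1
    rw [Submodule.Quotient.mk_eq_zero] at h2
    rwa [smul_eq_mul] at h2
  -- Contradiction with (†) at K.
  apply hJno
  refine Set.mem_add.mpr ⟨r - j, ?_, -b, neg_mem hb, ?_⟩
  · intro κ hκ
    rw [mul_sub]
    exact J.sub_mem (hcol κ hκ) (J.mul_mem_left κ hj)
  · -- (r - j) + -b = 1, from j + b = r - 1
    have hreq : r = j + b + 1 := sub_eq_iff_eq_add.mp hjb.symm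
    rw [hreq]; abel
end

section
/- Let R be a ring and 𝓘 a downward filtered set of two-sided ideals of R. The following two conditions are equivalent: (i) for every I ∈ 𝓘, ⋂_J ((J : I) + I) = I, where J runs over all ideals in 𝓘 with J ⊆ I; (ii) for any I, K ∈ 𝓘 with I ⊆ K and any r ∈ R with r ∈ (I : K) but r ∉ I, there exists J ∈ 𝓘 with J ⊆ I such that r ∉ (J : K) + I (equivalently: the coset r + I, which lies in (R/I)_K, is not in the image of the canonical map (R/J)_K → (R/I)_K). -/
open Function Pointwise

/-- **(Chirvasitu–Kanda, Lemma 4.3.)** Let `R` be a ring and `𝓘` a downward filtered set of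
two-sided ideals of `R`. Then `⋂_{J ∈ 𝓘, J ⊆ I} ((J : I) + I) = I` holds for every `I ∈ 𝓘`
if and only if: for all `I, K ∈ 𝓘` with `I ⊆ K` and every `r ∈ (I : K)` with `r ∉ I`
(i.e. every non-zero element `r + I` of `(R/I)_K`), there is `J ∈ 𝓘` with `J ⊆ I` such that
`r ∉ (J : K) + I` (i.e. `r + I` is not in the image of `(R/J)_K → (R/I)_K`). -/
theorem stmt_7 (R : Type) [Ring R] (𝓘 : Set (Ideal R))
    (htwosided : ∀ I ∈ 𝓘, ∀ a ∈ I, ∀ r : R, a * r ∈ I)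
    (hne : 𝓘.Nonempty)
    (hfil : ∀ I₁ ∈ 𝓘, ∀ I₂ ∈ 𝓘, ∃ J ∈ 𝓘, J ≤ I₁ ∧ J ≤ I₂) :
    (∀ I ∈ 𝓘,
      (⋂ J ∈ {J : Ideal R | J ∈ 𝓘 ∧ J ≤ I}, (idealColon R J I + (I : Set R))) = (I : Set R)) ↔
    (∀ I ∈ 𝓘, ∀ K ∈ 𝓘, I ≤ K → ∀ r : R, r ∈ idealColon R I K → r ∉ I →
      ∃ J ∈ 𝓘, J ≤ I ∧ r ∉ idealColon R J K + (I : Set R)) := by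
  constructor
  · intro h I hI K hK hIK r hrK hrI
    by_contra hc
    push_neg at hc
    apply hrI
    show r ∈ (I : Set R)
    rw [← h I hI]
    refine Set.mem_iInter₂.mpr ?_
    rintro J ⟨hJ, hJI⟩
    obtain ⟨a, ha, b, hb, hab⟩ := Set.mem_add.mp (hc J hJ hJI)
    exact Set.mem_add.mpr ⟨a, fun i hi => ha i (hIK hi), b, hb, hab⟩
  · intro h I hI
    apply subset_antisymm
    · intro r hr
      by_contra hrI
      obtain ⟨J, hJ, hJI, hJr⟩ :=
        h I hI I hI le_rfl r (fun i hi => htwosided I hI i hi r) hrI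
      exact hJr (Set.mem_iInter₂.mp hr J ⟨hJ, hJI⟩)
    · intro r hr
      refine Set.mem_iInter₂.mpr fun J _ => Set.mem_add.mpr ⟨0, fun i _ => ?_, r, hr, zero_add r⟩
      simp
end

section
/- Let G be an infinite profinite group and R = ℤ[G] its group ring. For each open normal subgroup H of G let I_H denote the kernel of the canonical surjection ℤ[G] → ℤ[G/H]. Then for every open normal subgroup H of G, ⋂_K ((I_K : I_H) + I_H) = I_H, where K runs over all open normal subgroups of G with K ≤ H. In particular, the downward filtered set 𝓘 = {I_H : H open normal in G} satisfies the intersection condition ⋂_{J∈𝓘, J⊆I} ((J : I) + I) = I for all I ∈ 𝓘. -/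
/-!
Write `r = c + i` with `c ∈ (I_K : I_H)` and `i ∈ I_H`. Multiplying `c` by the elements
`h - 1`, `h ∈ H`, shows that the image of `c` in `ℤ[G/K]` is invariant under left translation
by `H`, hence constant on the fibres of `G/K → G/H`, each of which has `[H : K]` elements. So
every coefficient of the image of `r` in `ℤ[G/H]` is divisible by `[H : K]`. As `G` is infinite
and `H` has finite index, `H` is infinite, and open normal subgroups of a profinite group can
separate any finitely many points of `H`; thus `[H : K]` is unbounded and those coefficients
vanish.
-/

open Function Pointwise

/-- For a normal subgroup `H` of `G`, the ideal `I_H`: the kernel of the canonical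
surjection `ℤ[G] → ℤ[G/H]`. -/
noncomputable def augIdeal (G : Type) [Group G] (H : Subgroup G) (hn : H.Normal) :
    Ideal (MonoidAlgebra ℤ G) :=
  letI := hn
  RingHom.ker (MonoidAlgebra.mapDomainRingHom ℤ (QuotientGroup.mk' H))

theorem Finsupp.mapDomain_fst_equiv_apply_of_forall_eq {A B C M : Type*} [Fintype B] [Fintype C]
    [AddCommMonoid M] (e : A ≃ B × C) (v : A →₀ M) {b : B} {m : M}
    (hv : ∀ a, (e a).1 = b → v a = m) :
    v.mapDomain (fun a => (e a).1) b = Fintype.card C • m := by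
  classical
  let := Fintype.ofEquiv _ e.symm
  calc v.mapDomain (fun a => (e a).1) b
      = ∑ a, if (e a).1 = b then v a else 0 := by
        rw [Finsupp.mapDomain, Finsupp.sum_apply, Finsupp.sum_fintype _ _ (by simp)]
        simp only [Finsupp.single_apply]
    _ = ∑ p : B × C, if p.1 = b then v (e.symm p) else 0 :=
        (e.symm.sum_comp fun a => if (e a).1 = b then v a else 0).symm.trans (by simp)
    _ = ∑ _ : C, m := by
        rw [Fintype.sum_prod_type, Finset.sum_comm]
        simp only [Finset.sum_ite_eq', Finset.mem_univ, if_true]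
        exact Finset.sum_congr rfl fun c _ => hv _ (by simp)
    _ = Fintype.card C • m := by simp

theorem Subgroup.exists_openNormalSubgroup_lt_relIndex {G : Type*} [Group G]
    [TopologicalSpace G] [IsTopologicalGroup G] [CompactSpace G] [TotallyDisconnectedSpace G]
    [Infinite G] {H : Subgroup G} (hH : IsOpen (H : Set G)) (n : ℕ) :
    ∃ K : OpenNormalSubgroup G, (K : Subgroup G) ≤ H ∧ n < (K : Subgroup G).relIndex H := by
  classical
  have hfinQ : Finite (G ⧸ H) := H.quotient_finite_of_isOpen hH
  have : Infinite H := by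
    refine not_finite_iff_infinite.mp fun hfin => ?_
    have : Finite G := (finite_iff_subgroup_quotient H).mpr ⟨hfin, hfinQ⟩
    exact not_finite G
  obtain ⟨F, hF⟩ := Infinite.exists_subset_card_eq H (n + 1)
  -- an open normal subgroup avoiding `S` separates the points of `F`
  let S : Finset G := F.offDiag.image fun p => (p.1 : G)⁻¹ * p.2
  have hS : (1 : G) ∉ S := by
    simp only [S, Finset.mem_image, Finset.mem_offDiag, not_exists, not_and]
    exact fun p ⟨_, _, hne⟩ h => hne (Subtype.ext (inv_mul_eq_one.mp h))
  obtain ⟨K, hK⟩ := ProfiniteGrp.exist_openNormalSubgroup_sub_open_nhds_of_one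
    (hH.sdiff S.finite_toSet.isClosed) ⟨H.one_mem, hS⟩
  refine ⟨K, fun x hx => (hK hx).1, ?_⟩
  have : (K : Subgroup G).FiniteIndex := Subgroup.finiteIndex_of_finite_quotient
  let := Fintype.ofFinite (H ⧸ (K : Subgroup G).subgroupOf H)
  have hinj : Set.InjOn (fun x : H => (x : H ⧸ (K : Subgroup G).subgroupOf H)) F := by
    intro x hx y hy hxy
    by_contra hne
    have hxyK : (x : G)⁻¹ * y ∈ (K : Subgroup G) :=
      Subgroup.mem_subgroupOf.mp (QuotientGroup.eq.mp hxy)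
    exact (hK hxyK).2
      (Finset.mem_image.mpr ⟨(x, y), Finset.mem_offDiag.mpr ⟨hx, hy, hne⟩, rfl⟩)
  calc n < F.card := by omega
    _ ≤ (Finset.univ : Finset (H ⧸ (K : Subgroup G).subgroupOf H)).card :=
        Finset.card_le_card_of_injOn _ (fun _ _ => Finset.mem_coe.mpr (Finset.mem_univ _)) hinj
    _ = (K : Subgroup G).relIndex H := by
        rw [Finset.card_univ, ← Nat.card_eq_fintype_card]
        rfl

theorem subset_idealColon_add {R : Type} [Ring R] (J I : Ideal R) :
    (I : Set R) ⊆ idealColon R J I + (I : Set R) :=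
  fun r hr => ⟨0, fun i _ => by simp, r, hr, zero_add r⟩

section GroupAlgebra

open MonoidAlgebra QuotientGroup

variable {G : Type} [Group G] {K H : Subgroup G} [hnK : K.Normal] [hnH : H.Normal]

theorem mem_augIdeal_iff {x : MonoidAlgebra ℤ G} :
    x ∈ augIdeal G H hnH ↔ mapDomainRingHom ℤ (mk' H) x = 0 :=
  RingHom.mem_ker

theorem single_sub_one_mem_augIdeal {h : G} (hh : h ∈ H) :
    single h (1 : ℤ) - 1 ∈ augIdeal G H hnH := by
  rw [mem_augIdeal_iff, map_sub, map_one, mapDomainRingHom_apply, mapDomain_single,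
    mk'_apply, (eq_one_iff h).mpr hh, sub_eq_zero, one_def]

theorem coeff_mapDomainRingHom_mk'_of_le (hKH : K ≤ H) (x : MonoidAlgebra ℤ G) :
    (mapDomainRingHom ℤ (mk' H) x).coeff =
      (mapDomainRingHom ℤ (mk' K) x).coeff.mapDomain
        fun a => (Subgroup.quotientEquivProdOfLE hKH a).1 := by
  simp only [mapDomainRingHom_apply, coeff_mapDomain, ← Finsupp.mapDomain_comp]
  rfl

theorem augIdeal_mono (hKH : K ≤ H) : augIdeal G K hnK ≤ augIdeal G H hnH := by
  intro x hx
  rw [mem_augIdeal_iff] at hx ⊢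
  rw [← coeff_eq_zero, coeff_mapDomainRingHom_mk'_of_le hKH, hx, coeff_zero,
    Finsupp.mapDomain_zero]

theorem coeff_mk_mul_of_mem_idealColon {c : MonoidAlgebra ℤ G}
    (hc : c ∈ idealColon (MonoidAlgebra ℤ G) (augIdeal G K hnK) (augIdeal G H hnH))
    {h : G} (hh : h ∈ H) (g : G) :
    (mapDomainRingHom ℤ (mk' K) c).coeff (mk (h * g)) =
      (mapDomainRingHom ℤ (mk' K) c).coeff (mk g) := by
  have hmem := hc _ (single_sub_one_mem_augIdeal hh)
  have hsingle : mapDomainRingHom ℤ (mk' K) (single h (1 : ℤ)) = single (mk h) 1 := by simp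
  rw [mem_augIdeal_iff, map_mul, map_sub, map_one, hsingle, sub_mul, one_mul,
    sub_eq_zero] at hmem
  simpa [coeff_single_mul_apply, mk_mul] using congr(($hmem).coeff (mk (h * g))).symm

theorem relIndex_dvd_coeff_of_mem_idealColon [K.FiniteIndex] (hKH : K ≤ H)
    {c : MonoidAlgebra ℤ G}
    (hc : c ∈ idealColon (MonoidAlgebra ℤ G) (augIdeal G K hnK) (augIdeal G H hnH))
    (b : G ⧸ H) :
    (K.relIndex H : ℤ) ∣ (mapDomainRingHom ℤ (mk' H) c).coeff b := by
  have : H.FiniteIndex := Subgroup.finiteIndex_of_le hKH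
  let := Fintype.ofFinite (G ⧸ H)
  let := Fintype.ofFinite (H ⧸ K.subgroupOf H)
  obtain ⟨g, rfl⟩ := mk_surjective b
  have hconst : ∀ a, (Subgroup.quotientEquivProdOfLE hKH a).1 = (mk g : G ⧸ H) →
      (mapDomainRingHom ℤ (mk' K) c).coeff a = (mapDomainRingHom ℤ (mk' K) c).coeff (mk g) := by
    intro a ha
    obtain ⟨g', rfl⟩ := mk_surjective a
    have hmem : g * g'⁻¹ ∈ H :=
      hnH.mem_comm_iff.mp (QuotientGroup.eq.mp (ha : (mk g' : G ⧸ H) = mk g))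
    simpa using (coeff_mk_mul_of_mem_idealColon hc hmem g').symm
  rw [coeff_mapDomainRingHom_mk'_of_le hKH,
    Finsupp.mapDomain_fst_equiv_apply_of_forall_eq _ _ hconst, nsmul_eq_mul, Subgroup.relIndex,
    Subgroup.index, Nat.card_eq_fintype_card]
  exact dvd_mul_right _ _

end GroupAlgebra

theorem mem_augIdeal_of_forall_mem_idealColon_add {G : Type} [Group G] [TopologicalSpace G]
    [IsTopologicalGroup G] [CompactSpace G] [TotallyDisconnectedSpace G] [Infinite G]
    {H : Subgroup G} [hn : H.Normal] (hH : IsOpen (H : Set G)) {r : MonoidAlgebra ℤ G}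
    (hr : ∀ K : OpenNormalSubgroup G, (K : Subgroup G) ≤ H →
      r ∈ idealColon _ (augIdeal G K inferInstance) (augIdeal G H hn) +
        (augIdeal G H hn : Set (MonoidAlgebra ℤ G))) :
    r ∈ augIdeal G H hn := by
  rw [mem_augIdeal_iff]
  ext b
  obtain ⟨K, hKH, hlt⟩ := H.exists_openNormalSubgroup_lt_relIndex hH
    ((MonoidAlgebra.mapDomainRingHom ℤ (QuotientGroup.mk' H) r).coeff b).natAbs
  obtain ⟨c, hc, i, hi, rfl⟩ := hr K hKH
  have : (K : Subgroup G).FiniteIndex := Subgroup.finiteIndex_of_finite_quotient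
  rw [map_add, mem_augIdeal_iff.mp hi, add_zero] at hlt ⊢
  exact Int.eq_zero_of_dvd_of_natAbs_lt_natAbs (relIndex_dvd_coeff_of_mem_idealColon hKH hc b)
    (by simpa using hlt)

theorem stmt_8_general (G : Type) [Group G] [TopologicalSpace G] [IsTopologicalGroup G]
    [CompactSpace G] [TotallyDisconnectedSpace G] [Infinite G] :
    (∀ (H : Subgroup G) (hn : H.Normal), IsOpen (H : Set G) →
      (⋂ (K : Subgroup G) (hnK : K.Normal) (_ : IsOpen (K : Set G)) (_ : K ≤ H),
          (idealColon (MonoidAlgebra ℤ G) (augIdeal G K hnK) (augIdeal G H hn) +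
            (augIdeal G H hn : Set (MonoidAlgebra ℤ G)))) =
        (augIdeal G H hn : Set (MonoidAlgebra ℤ G))) ∧
    (∀ I ∈ {I : Ideal (MonoidAlgebra ℤ G) |
        ∃ (H : Subgroup G) (hn : H.Normal), IsOpen (H : Set G) ∧ I = augIdeal G H hn},
      (⋂ J ∈ {J : Ideal (MonoidAlgebra ℤ G) |
          (∃ (H : Subgroup G) (hn : H.Normal), IsOpen (H : Set G) ∧ J = augIdeal G H hn) ∧
          J ≤ I},
        (idealColon (MonoidAlgebra ℤ G) J I + (I : Set (MonoidAlgebra ℤ G)))) =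
      (I : Set (MonoidAlgebra ℤ G))) := by
  refine ⟨fun H hn hH => ?_, ?_⟩
  · refine subset_antisymm (fun r hr => ?_) (Set.subset_iInter₂ fun K _ =>
      Set.subset_iInter₂ fun _ _ => subset_idealColon_add _ _)
    simp only [Set.mem_iInter] at hr
    exact mem_augIdeal_of_forall_mem_idealColon_add hH fun K hKH => hr K _ K.isOpen hKH
  · rintro _ ⟨H, hn, hH, rfl⟩
    refine subset_antisymm (fun r hr => ?_)
      (Set.subset_iInter₂ fun J _ => subset_idealColon_add _ _)
    simp only [Set.mem_iInter] at hr
    exact mem_augIdeal_of_forall_mem_idealColon_add hH fun K hKH =>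
      hr _ ⟨⟨K, inferInstance, K.isOpen, rfl⟩, augIdeal_mono hKH⟩

/-- **(Chirvasitu–Kanda, Remark 4.4.)** Let `G` be an infinite profinite group and, for an
open normal subgroup `H` of `G`, let `I_H = ker(ℤ[G] → ℤ[G/H])`. Then for every open normal
`H`, `⋂_K ((I_K : I_H) + I_H) = I_H`, where `K` runs over open normal subgroups `K ≤ H`; in
particular the downward filtered set `𝓘 = {I_H}` satisfies the intersection condition
`⋂_{J ∈ 𝓘, J ⊆ I} ((J : I) + I) = I` for all `I ∈ 𝓘`. -/
theorem stmt_8 (G : Type) [Group G] [TopologicalSpace G] [IsTopologicalGroup G]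
    [CompactSpace G] [T2Space G] [TotallyDisconnectedSpace G] [Infinite G] :
    (∀ (H : Subgroup G) (hn : H.Normal), IsOpen (H : Set G) →
      (⋂ (K : Subgroup G) (hnK : K.Normal) (_ : IsOpen (K : Set G)) (_ : K ≤ H),
          (idealColon (MonoidAlgebra ℤ G) (augIdeal G K hnK) (augIdeal G H hn) +
            (augIdeal G H hn : Set (MonoidAlgebra ℤ G)))) =
        (augIdeal G H hn : Set (MonoidAlgebra ℤ G))) ∧
    (∀ I ∈ {I : Ideal (MonoidAlgebra ℤ G) |
        ∃ (H : Subgroup G) (hn : H.Normal), IsOpen (H : Set G) ∧ I = augIdeal G H hn},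
      (⋂ J ∈ {J : Ideal (MonoidAlgebra ℤ G) |
          (∃ (H : Subgroup G) (hn : H.Normal), IsOpen (H : Set G) ∧ J = augIdeal G H hn) ∧
          J ≤ I},
        (idealColon (MonoidAlgebra ℤ G) J I + (I : Set (MonoidAlgebra ℤ G)))) =
      (I : Set (MonoidAlgebra ℤ G))) :=
  stmt_8_general G
end

section
/- Let G be a group, N' and N normal subgroups of G with N' ≤ N, and K a normal subgroup of G such that the index [K ∩ N : K ∩ N'] is finite. Let π : ℤ[G/N'] → ℤ[G/N] be the canonical map induced by the surjection G/N' → G/N. If x ∈ ℤ[G/N'] is fixed by every element of K (for the action of G by left multiplication on cosets), then every coefficient of π(x) is divisible by [K ∩ N : K ∩ N']; that is, the image of the K-invariants of ℤ[G/N'] in ℤ[G/N] consists of [K ∩ N : K ∩ N']-multiples. -/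
/-- The canonical map of coset spaces `G ⧸ S → G ⧸ T` induced by an inclusion `S ≤ T` of
subgroups, sending `gS` to `gT`. -/
def quotMap {G : Type} [Group G] {S T : Subgroup G} (h : S ≤ T) : G ⧸ S → G ⧸ T :=
  Quotient.map' id fun _ _ hab =>
    QuotientGroup.leftRel_apply.mpr (h (QuotientGroup.leftRel_apply.mp hab))

/-!
Let `H = K ∩ N`. Since `N'` is normal, every point of `G/N'` has stabilizer `H ∩ N'` in `H`,
so every `H`-orbit in `G/N'` has exactly `[H : H ∩ N']` elements. The fibre of `G/N' → G/N`
over a coset is `H`-stable because `N` acts trivially on `G/N`, and so is the support of the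
`K`-invariant `x`. Their intersection is therefore a finite union of `H`-orbits, on each of which
`x` is constant, and the coefficient of `π(x)` is the sum of `x` over it.
-/

open MulAction

section OrbitSums

variable {H α R : Type*} [Group H] [MulAction H α] [Semiring R]

theorem natCast_dvd_sum_of_ncard_orbit_eq {n : ℕ} {s : Finset α}
    (hs : ∀ g : H, ∀ a ∈ s, g • a ∈ s) (hn : ∀ a ∈ s, (orbit H a).ncard = n)
    {f : α → R} (hf : ∀ (g : H) a, f (g • a) = f a) : (n : R) ∣ ∑ a ∈ s, f a := by
  classical
  let p : α → orbitRel.Quotient H α := Quotient.mk _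
  rw [← Finset.sum_fiberwise_of_maps_to (g := p) fun a ha => Finset.mem_image_of_mem p ha]
  refine Finset.dvd_sum fun ω hω => ?_
  obtain ⟨a, ha, rfl⟩ := Finset.mem_image.mp hω
  have hfibre : ∀ b, b ∈ {b ∈ s | p b = p a} ↔ b ∈ orbit H a := by
    intro b
    simp only [Finset.mem_filter, p, Quotient.eq, orbitRel_apply, and_iff_right_iff_imp]
    rintro ⟨g, rfl⟩
    exact hs g a ha
  have hcard : ({b ∈ s | p b = p a} : Finset α).card = n := by
    rw [← hn a ha, ← Set.ncard_coe_finset]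
    exact congrArg Set.ncard (Set.ext hfibre)
  have hconst : ∀ b ∈ {b ∈ s | p b = p a}, f b = f a := by
    intro b hb
    obtain ⟨g, rfl⟩ := (hfibre b).mp hb
    exact hf g a
  rw [Finset.sum_congr rfl hconst, Finset.sum_const, hcard, nsmul_eq_mul]
  exact dvd_mul_right _ _

end OrbitSums

namespace QuotientGroup

variable {G : Type*} [Group G]

theorem smul_eq_self_iff_s10 (N : Subgroup G) [N.Normal] (k : G) (c : G ⧸ N) :
    k • c = c ↔ k ∈ N := by
  induction c using QuotientGroup.induction_on with
  | H g => rw [MulAction.Quotient.smul_mk, smul_eq_mul, mk_mul, mul_eq_right, eq_one_iff]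

theorem stabilizer_subgroup_eq_subgroupOf (N : Subgroup G) [N.Normal] (H : Subgroup G)
    (c : G ⧸ N) : stabilizer H c = N.subgroupOf H := by
  ext k
  exact smul_eq_self_iff_s10 N k c

end QuotientGroup

theorem quotMap_smul {G : Type} [Group G] {S T : Subgroup G} (h : S ≤ T) (g : G) (a : G ⧸ S) :
    quotMap h (g • a) = g • quotMap h a := by
  induction a using QuotientGroup.induction_on with
  | H _ => rfl

theorem stmt_10_general (G : Type) [Group G] (N' N K : Subgroup G)
    [N'.Normal] [N.Normal] (hNN : N' ≤ N)
    (x : (G ⧸ N') →₀ ℤ)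
    (hx : ∀ g ∈ K, Finsupp.mapDomain (fun c : G ⧸ N' => g • c) x = x) :
    ∀ c : G ⧸ N, ((K ⊓ N').relIndex (K ⊓ N) : ℤ) ∣ Finsupp.mapDomain (quotMap hNN) x c := by
  classical
  intro c
  induction c using QuotientGroup.induction_on with | H g => ?_
  have hxinv : ∀ k ∈ K, ∀ a, x (k • a) = x a := fun k hk a => by
    rw [← Finsupp.mapDomain_apply (MulAction.injective k) x a, hx k hk]
  rw [show (g : G ⧸ N) = quotMap hNN g from rfl, Finsupp.mapDomain_apply_eq_sum]
  refine natCast_dvd_sum_of_ncard_orbit_eq (H := ↥(K ⊓ N)) ?_ (fun a _ => ?_)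
    fun k a => hxinv k (Subgroup.mem_inf.mp k.2).1 a
  · intro k a ha
    obtain ⟨hkK, hkN⟩ := Subgroup.mem_inf.mp k.2
    simp only [Finset.mem_filter, Finsupp.mem_support_iff] at ha ⊢
    refine ⟨(hxinv k hkK a).symm ▸ ha.1, ?_⟩
    change quotMap hNN ((k : G) • a) = _
    rw [quotMap_smul, (QuotientGroup.smul_eq_self_iff_s10 N _ _).mpr hkN, ha.2]
  · rw [← index_stabilizer, QuotientGroup.stabilizer_subgroup_eq_subgroupOf]
    change N'.relIndex (K ⊓ N) = _
    rw [← Subgroup.inf_relIndex_right N', inf_left_comm, inf_eq_left.mpr hNN]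

/-- **(Chirvasitu–Kanda, key divisibility step in Theorem 2.1.)** Let `G` be a group,
`N' ≤ N` and `K` normal subgroups of `G` with `[K ∩ N : K ∩ N']` finite, and let
`π : ℤ[G/N'] → ℤ[G/N]` be the canonical map. If `x ∈ ℤ[G/N']` is fixed by every element of
`K` (for the `G`-action by left multiplication on cosets extended linearly), then every
coefficient of `π(x)` is divisible by `[K ∩ N : K ∩ N']`. -/
theorem stmt_10 (G : Type) [Group G] (N' N K : Subgroup G)
    [N'.Normal] [N.Normal] [K.Normal] (hNN : N' ≤ N)
    (hfin : (K ⊓ N').relIndex (K ⊓ N) ≠ 0)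
    (x : (G ⧸ N') →₀ ℤ)
    (hx : ∀ g ∈ K, Finsupp.mapDomain (fun c : G ⧸ N' => g • c) x = x) :
    ∀ c : G ⧸ N, ((K ⊓ N').relIndex (K ⊓ N) : ℤ) ∣ Finsupp.mapDomain (quotMap hNN) x c :=
  stmt_10_general G N' N K hNN x hx
end

section
/- Let G be an infinite profinite group and let 𝒩 denote the set of open normal subgroups of G. For each H ∈ 𝒩 let ε_H : ℤ[G/H] → ℤ be the augmentation map. Then the constant all-1 family (1)_{H∈𝒩} ∈ ∏_{H∈𝒩} ℤ is not in the image, under the product map ∏_{H∈𝒩} ε_H, of the set of elements x = (x_H)_{H∈𝒩} ∈ ∏_{H∈𝒩} ℤ[G/H] for which there exists an open normal subgroup K of G fixing x componentwise. (In other words, the product in the category of discrete G-modules of the augmentation epimorphisms ℤ[G/H] → ℤ is not an epimorphism.) -/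
/-!
Suppose `x` were such a family, fixed by the open normal subgroup `K`. Since `G` is infinite, `K`
contains some `g ≠ 1`, and since `G` is profinite some open normal `N` misses `g`. The image of
`K` in the finite group `G ⧸ N` is then a nontrivial subgroup acting freely by left
multiplication, and `x_N` is constant on its orbits, so the order of that image divides
`ε_N (x_N) = 1`.
-/

theorem MulAction.natCard_dvd_sum_of_isCancelSMul {S α R : Type*} [Group S] [Finite S]
    [MulAction S α] [IsCancelSMul S α] [Fintype α] [CommSemiring R] (f : α → R)
    (hf : ∀ (s : S) (a : α), f (s • a) = f a) : (Nat.card S : R) ∣ ∑ a, f a := by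
  classical
  have : Fintype S := Fintype.ofFinite S
  let e := selfEquivOrbitsQuotientProd (G := S) (X := α) IsCancelSMul.stabilizer_eq_bot
  have hconst : ∀ ω s, f (e.symm (ω, s)) = f ω.out := by
    intro ω s
    obtain ⟨t, ht⟩ : e.symm (ω, s) ∈ orbit S ω.out := by
      have h : Quotient.mk'' (e.symm (ω, s)) = Quotient.mk'' ω.out :=
        (congrArg Prod.fst (e.apply_symm_apply (ω, s))).trans ω.out_eq'.symm
      exact orbitRel_apply.mp (Quotient.exact' h)
    rw [← ht, hf]
  rw [← e.symm.sum_comp, Fintype.sum_prod_type]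
  refine Finset.dvd_sum fun ω _ => ?_
  simp only [hconst, Finset.sum_const, Finset.card_univ, nsmul_eq_mul, Nat.card_eq_fintype_card]
  exact dvd_mul_right _ _

theorem Finsupp.apply_smul_of_mapDomain_smul_eq {G α M : Type*} [Group G] [MulAction G α]
    [AddCommMonoid M] {v : α →₀ M} {g : G} (hv : v.mapDomain (g • ·) = v) (a : α) :
    v (g • a) = v a := by
  conv_lhs => rw [← hv]
  exact mapDomain_apply (MulAction.injective g) v a

theorem Subgroup.ne_bot_of_isOpen {G : Type*} [Group G] [TopologicalSpace G]
    [SeparatelyContinuousMul G] [CompactSpace G] [Infinite G] {K : Subgroup G}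
    (hK : IsOpen (K : Set G)) : K ≠ ⊥ := by
  rintro rfl
  have := Subgroup.quotient_finite_of_isOpen ⊥ hK
  have : Finite G := .of_equiv _ QuotientGroup.quotientBot.toEquiv
  exact not_finite G

theorem ProfiniteGrp.exists_openNormalSubgroup_notMem {G : Type*} [Group G]
    [TopologicalSpace G] [IsTopologicalGroup G] [CompactSpace G] [TotallyDisconnectedSpace G]
    {g : G} (hg : g ≠ 1) : ∃ N : OpenNormalSubgroup G, g ∉ N := by
  obtain ⟨N, hN⟩ := exist_openNormalSubgroup_sub_open_nhds_of_one
    (isOpen_compl_singleton (x := g)) hg.symm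
  exact ⟨N, fun hgN => hN hgN rfl⟩

theorem stmt_12_general (G : Type) [Group G] [TopologicalSpace G] [IsTopologicalGroup G]
    [CompactSpace G] [TotallyDisconnectedSpace G] [Infinite G] :
    ¬ ∃ x : ∀ H : {H : Subgroup G // H.Normal ∧ IsOpen (H : Set G)}, (G ⧸ H.1) →₀ ℤ,
        (∃ K : Subgroup G, K.Normal ∧ IsOpen (K : Set G) ∧
          ∀ (H : {H : Subgroup G // H.Normal ∧ IsOpen (H : Set G)}), ∀ g ∈ K,
            Finsupp.mapDomain (fun c : G ⧸ H.1 => g • c) (x H) = x H) ∧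
        ∀ H : {H : Subgroup G // H.Normal ∧ IsOpen (H : Set G)},
          ((x H).sum fun _ n => n) = 1 := by
  rintro ⟨x, ⟨K, -, hKo, hK⟩, hsum⟩
  obtain ⟨⟨g, hgK⟩, hg⟩ := Subgroup.ne_bot_iff_exists_ne_one.mp (Subgroup.ne_bot_of_isOpen hKo)
  obtain ⟨N, hgN⟩ := ProfiniteGrp.exists_openNormalSubgroup_notMem (g := g) (by simpa using hg)
  let H : {H : Subgroup G // H.Normal ∧ IsOpen (H : Set G)} := ⟨N, N.isNormal', N.isOpen'⟩
  have := H.1.quotient_finite_of_isOpen H.2.2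
  have := Fintype.ofFinite (G ⧸ H.1)
  let S := K.map (QuotientGroup.mk' H.1)
  have hS : (Nat.card S : ℤ) ∣ 1 := by
    rw [← hsum H, Finsupp.sum_fintype _ _ fun _ => rfl]
    refine MulAction.natCard_dvd_sum_of_isCancelSMul _ fun ⟨_, k, hk, rfl⟩ c => ?_
    exact Finsupp.apply_smul_of_mapDomain_smul_eq (hK H k hk) c
  have hS_bot : S = ⊥ :=
    Subgroup.card_eq_one.mp (by exact_mod_cast Int.eq_one_of_dvd_one (by positivity) hS)
  have hgS : (g : G ⧸ H.1) ∈ S := ⟨g, hgK, rfl⟩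
  rw [hS_bot, Subgroup.mem_bot, QuotientGroup.eq_one_iff] at hgS
  exact hgN hgS

/-- **(Chirvasitu–Kanda, Proposition 2.2, key step.)** Let `G` be an infinite profinite group
and `𝒩` its set of open normal subgroups. The constant all-`1` family in `∏_{H ∈ 𝒩} ℤ` is
not the image, under the product of the augmentation maps `ε_H : ℤ[G/H] → ℤ`, of any family
`(x_H) ∈ ∏_{H ∈ 𝒩} ℤ[G/H]` fixed componentwise by a single open normal subgroup `K` (i.e. of
any element of the product of the `ℤ[G/H]` computed in the category of discrete
`G`-modules). -/
theorem stmt_12 (G : Type) [Group G] [TopologicalSpace G] [IsTopologicalGroup G]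
    [CompactSpace G] [T2Space G] [TotallyDisconnectedSpace G] [Infinite G] :
    ¬ ∃ x : ∀ H : {H : Subgroup G // H.Normal ∧ IsOpen (H : Set G)}, (G ⧸ H.1) →₀ ℤ,
        (∃ K : Subgroup G, K.Normal ∧ IsOpen (K : Set G) ∧
          ∀ (H : {H : Subgroup G // H.Normal ∧ IsOpen (H : Set G)}), ∀ g ∈ K,
            Finsupp.mapDomain (fun c : G ⧸ H.1 => g • c) (x H) = x H) ∧
        ∀ H : {H : Subgroup G // H.Normal ∧ IsOpen (H : Set G)},
          ((x H).sum fun _ n => n) = 1 :=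
  stmt_12_general G
end
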